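/- arXiv:0706.3816 — 6 statements merged into one kernel-verified Lean document; each statement's English description precedes it below -/
import Mathlib

section
/- Let f be holomorphic on the disc D_R = {z : |z| < R}, with Re f > 0 on D_R. Let z = r e^{iθ} and a = r_a e^{iθ} with 0 ≤ r_a ≤ r < R. Then for every n ≥ 1, |f^{(n)}(z)| ≤ (2 n! R (R - r_a)) / ((R - r)^{n+1} (R + r_a)) · Re f(a). -/
/-!
On a circle `|w| = s` with `r < s < R`, Cauchy's formula gives `f⁽ⁿ⁾(z) / n!` as the circle average
of `w f(w) / (w - z)ⁿ⁺¹`, while for `n ≥ 1` the same average with `conj f` vanishes (on the circle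
`conj w = s² / w`, so the conjugated kernel is holomorphic in the disc). Adding the two expresses
`f⁽ⁿ⁾(z)` through `2 Re f ≥ 0` alone. Because `z` and `a` lie on one ray, the kernel
`|w / (w - z)ⁿ⁺¹|` is dominated by `s (s - r_a) / ((s - r)ⁿ⁺¹ (s + r_a))` times the Poisson kernel
of `a`, and the Poisson formula turns the resulting average of `Re f` into `Re f(a)`. Finally
let `s → R`.
-/

open Complex Metric Real ComplexConjugate

section

variable {E : Type*} [NormedAddCommGroup E] [NormedSpace ℂ E]

theorem Real.norm_circleAverage_le {f : ℂ → E} {g : ℂ → ℝ} {c : ℂ} {R : ℝ}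
    (hg : CircleIntegrable g c R) (hfg : ∀ w ∈ sphere c |R|, ‖f w‖ ≤ g w) :
    ‖circleAverage f c R‖ ≤ circleAverage g c R := by
  rw [circleAverage_def, circleAverage_def, norm_smul, smul_eq_mul, norm_inv,
    Real.norm_of_nonneg two_pi_pos.le]
  gcongr
  exact intervalIntegral.norm_integral_le_of_norm_le two_pi_pos.le
    (MeasureTheory.ae_of_all _ fun θ _ => hfg _ (circleMap_mem_sphere' c R θ)) hg

theorem HasDerivAt.sub_pow_inv_smul {f : ℂ → E} {f' : E} {w z : ℂ} (hf : HasDerivAt f f' w)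
    (hwz : w ≠ z) (n : ℕ) :
    HasDerivAt (fun w => ((w - z) ^ (n + 1))⁻¹ • f w)
      (((w - z) ^ (n + 1))⁻¹ • f' - (n + 1 : ℂ) • ((w - z) ^ (n + 2))⁻¹ • f w) w := by
  have hwz' : w - z ≠ 0 := sub_ne_zero.2 hwz
  have hpow : HasDerivAt (fun w => ((w - z) ^ (n + 1))⁻¹)
      (-((n + 1 : ℂ) * ((w - z) ^ (n + 2))⁻¹)) w := by
    refine ((((hasDerivAt_id w).sub_const z).pow (n + 1)).inv
      (pow_ne_zero _ hwz')).congr_deriv ?_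
    simp only [id, Nat.add_sub_cancel, Pi.pow_apply]
    field_simp
    push_cast
    ring
  refine (hpow.smul hf).congr_deriv ?_
  rw [neg_smul, ← sub_eq_add_neg, smul_smul, add_comm]

theorem DiffContOnCl.circleAverage_sub_center_smul_eq_zero {h : ℂ → E} {c : ℂ} {R : ℝ}
    (hR : 0 < R) (hh : DiffContOnCl ℂ h (ball c R)) :
    Real.circleAverage (fun w => (w - c) • h w) c R = 0 := by
  rw [circleAverage_eq_circleIntegral hR.ne', circleIntegral.integral_congr hR.le (g := h),
    hh.circleIntegral_eq_zero hR.le, smul_zero]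
  intro w hw
  have : w - c ≠ 0 := sub_ne_zero.2 (ne_of_mem_sphere hw hR.ne')
  simp [smul_smul, inv_mul_cancel₀ this]

variable [CompleteSpace E]

theorem AnalyticOnNhd.circleIntegral_sub_pow_inv_smul {f : ℂ → E} {c z : ℂ} {R : ℝ}
    (hf : AnalyticOnNhd ℂ f (closedBall c R)) (hz : z ∈ ball c R) (n : ℕ) :
    ∮ w in C(c, R), ((w - z) ^ (n + 1))⁻¹ • f w
      = (2 * π * I / n.factorial) • iteratedDeriv n f z := by
  induction n generalizing f with
  | zero => simpa using hf.differentiableOn.circleIntegral_sub_inv_smul hz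
  | succ n ih =>
    have hR : 0 ≤ R := dist_nonneg.trans (mem_ball.1 hz).le
    have hwz : ∀ w ∈ sphere c R, w - z ≠ 0 := fun w hw =>
      sub_ne_zero.2 (by rintro rfl; exact (mem_ball.1 hz).ne (mem_sphere.1 hw))
    have hinteg : ∀ k (g : ℂ → E), ContinuousOn g (sphere c R) →
        CircleIntegrable (fun w => ((w - z) ^ k)⁻¹ • g w) c R := fun k g hg =>
      ((((continuousOn_id.sub continuousOn_const).pow k).inv₀
        fun w hw => pow_ne_zero _ (hwz w hw)).smul hg).circleIntegrable hR
    have hf' : ContinuousOn f (sphere c R) := hf.continuousOn.mono sphere_subset_closedBall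
    have hdf' : ContinuousOn (deriv f) (sphere c R) :=
      hf.deriv.continuousOn.mono sphere_subset_closedBall
    have hprim : ∀ w ∈ sphere c R, HasDerivAt (fun w => ((w - z) ^ (n + 1))⁻¹ • f w)
        (((w - z) ^ (n + 1))⁻¹ • deriv f w - (n + 1 : ℂ) • ((w - z) ^ (n + 2))⁻¹ • f w) w :=
      fun w hw => (hf w (sphere_subset_closedBall hw)).differentiableAt.hasDerivAt
        |>.sub_pow_inv_smul (sub_ne_zero.1 (hwz w hw)) n
    have hzero := circleIntegral.integral_eq_zero_of_hasDerivWithinAt hR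
      fun w hw => (hprim w hw).hasDerivWithinAt
    have hinteg' : CircleIntegrable (fun w => (n + 1 : ℂ) • ((w - z) ^ (n + 2))⁻¹ • f w) c R :=
      (hinteg (n + 2) f hf').continuousOn_smul (g := fun _ => (n + 1 : ℂ)) continuousOn_const
    rw [circleIntegral.integral_sub (hinteg _ _ hdf') hinteg',
      circleIntegral.integral_smul, ih hf.deriv, ← iteratedDeriv_succ', sub_eq_zero] at hzero
    have hn : (n + 1 : ℂ) ≠ 0 := Nat.cast_add_one_ne_zero n
    rw [← inv_smul_smul₀ hn (∮ w in C(c, R), _), ← hzero, smul_smul, Nat.factorial_succ]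
    congr 1
    push_cast
    field_simp

theorem AnalyticOnNhd.circleAverage_sub_center_div_sub_pow_smul {f : ℂ → E} {c z : ℂ} {R : ℝ}
    (hf : AnalyticOnNhd ℂ f (closedBall c R)) (hz : z ∈ ball c R) (n : ℕ) :
    Real.circleAverage (fun w => ((w - c) / (w - z) ^ (n + 1)) • f w) c R
      = (n.factorial : ℂ)⁻¹ • iteratedDeriv n f z := by
  have hR : 0 < R := dist_nonneg.trans_lt (mem_ball.1 hz)
  rw [circleAverage_eq_circleIntegral hR.ne',
    circleIntegral.integral_congr hR.le (g := fun w => ((w - z) ^ (n + 1))⁻¹ • f w),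
    hf.circleIntegral_sub_pow_inv_smul hz, smul_smul]
  · congr 1
    field_simp
  · intro w hw
    have : w - c ≠ 0 := sub_ne_zero.2 (ne_of_mem_sphere hw hR.ne')
    simp only [smul_smul]
    congr 1
    field_simp

end

theorem sq_sub_mul_ne_zero {R : ℝ} {w z : ℂ} (hw : ‖w‖ ≤ R) (hz : ‖z‖ < R) :
    (R : ℂ) ^ 2 - z * w ≠ 0 := by
  have hR : 0 < R := (norm_nonneg z).trans_lt hz
  have : ‖z * w‖ < ‖(R : ℂ) ^ 2‖ := by
    rw [norm_mul, norm_pow, Complex.norm_real, Real.norm_of_nonneg hR.le, sq]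
    exact mul_lt_mul_of_lt_of_le_of_nonneg_of_pos hz hw (norm_nonneg z) hR
  exact sub_ne_zero.2 fun h => this.ne' (by rw [h])

theorem conj_div_sub_pow_of_mem_sphere {R : ℝ} {w z : ℂ} (hw : w ∈ sphere (0 : ℂ) R)
    (hz : ‖z‖ < R) (n : ℕ) :
    conj (w / (w - z) ^ (n + 2)) = w * (R ^ 2 * w ^ n / (R ^ 2 - conj z * w) ^ (n + 2)) := by
  have hR : 0 < R := (norm_nonneg z).trans_lt hz
  have hw0 : w ≠ 0 := ne_of_mem_sphere hw hR.ne'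
  have hconj : conj w = R ^ 2 / w := by
    rw [eq_div_iff hw0, conj_mul', mem_sphere_zero_iff_norm.1 hw]
  have hd := sq_sub_mul_ne_zero (mem_sphere_zero_iff_norm.1 hw).le
    (by rwa [RCLike.norm_conj] : ‖conj z‖ < R)
  have hsub : (R : ℂ) ^ 2 / w - conj z = (R ^ 2 - conj z * w) / w := by
    field_simp
  rw [map_div₀, map_pow, map_sub, hconj, hsub, div_pow]
  field_simp
  ring

theorem DifferentiableOn.circleAverage_div_sub_pow_mul_conj_eq_zero {f : ℂ → ℂ} {z : ℂ} {R : ℝ}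
    (hf : DifferentiableOn ℂ f (closedBall 0 R)) (hz : z ∈ ball 0 R) (n : ℕ) :
    Real.circleAverage (fun w => w / (w - z) ^ (n + 2) * conj (f w)) 0 R = 0 := by
  have hzR : ‖z‖ < R := mem_ball_zero_iff.1 hz
  have hR : 0 < R := (norm_nonneg z).trans_lt hzR
  set g : ℂ → ℂ := fun w => R ^ 2 * w ^ n / (R ^ 2 - conj z * w) ^ (n + 2) * f w
  have hg : DifferentiableOn ℂ g (closedBall 0 R) := by
    refine DifferentiableOn.mul (DifferentiableOn.div (by fun_prop) (by fun_prop) ?_) hf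
    exact fun w hw => pow_ne_zero _ (sq_sub_mul_ne_zero (mem_closedBall_zero_iff.1 hw)
      (by rwa [RCLike.norm_conj]))
  have hconj : Set.EqOn (fun w => w / (w - z) ^ (n + 2) * conj (f w))
      ((conjCLE : ℂ →L[ℝ] ℂ) ∘ fun w => (w - 0) • g w) (sphere 0 |R|) := by
    intro w hw
    rw [abs_of_pos hR] at hw
    show _ = conj ((w - 0) • g w)
    rw [sub_zero, smul_eq_mul, ← mul_assoc, ← conj_div_sub_pow_of_mem_sphere hw hzR n, map_mul,
      conj_conj]
  have hint : CircleIntegrable (fun w => (w - 0) • g w) 0 R :=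
    ((continuousOn_id.sub continuousOn_const).smul
      (hg.continuousOn.mono sphere_subset_closedBall)).circleIntegrable hR.le
  rw [circleAverage_congr_sphere hconj, ContinuousLinearMap.circleAverage_comp_comm _ hint,
    (hg.mono closure_ball_subset_closedBall).diffContOnCl.circleAverage_sub_center_smul_eq_zero hR,
    map_zero]

theorem norm_sub_smul_mul_le {F : Type*} [NormedAddCommGroup F] [InnerProductSpace ℝ F]
    {u w : F} {s ρ r : ℝ} (hu : ‖u‖ = 1) (hw : ‖w‖ = s) (hρ : 0 ≤ ρ) (hρr : ρ ≤ r)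
    (hrs : r < s) :
    ‖w - ρ • u‖ * (s - r) ≤ (s - ρ) * ‖w - r • u‖ := by
  have hsq : ∀ t : ℝ, ‖w - t • u‖ ^ 2 = s ^ 2 - 2 * t * inner ℝ w u + t ^ 2 := fun t => by
    rw [norm_sub_sq_real, real_inner_smul_right, norm_smul, hu, hw, Real.norm_eq_abs, mul_one,
      sq_abs]
    ring
  have hx : inner ℝ w u ≤ s := by
    simpa [hu, hw] using (abs_real_inner_le_norm w u).trans' (le_abs_self _)
  have hkey : ρ * (s - r) ^ 2 ≤ r * (s - ρ) ^ 2 := by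
    nlinarith [mul_nonneg (sub_nonneg.2 hρr) (sq_nonneg (s - ρ)),
      mul_nonneg hρ (mul_nonneg (sub_nonneg.2 hρr) (by linarith : (0:ℝ) ≤ 2 * s - ρ - r))]
  refine (pow_le_pow_iff_left₀ (by have := norm_nonneg (w - ρ • u); nlinarith)
    (mul_nonneg (by linarith) (norm_nonneg _)) two_ne_zero).1 ?_
  rw [mul_pow, mul_pow, hsq, hsq]
  nlinarith [mul_nonneg (sub_nonneg.2 hx) (sub_nonneg.2 hkey)]

theorem norm_div_sub_pow_le_poissonKernel {u w : ℂ} {s ρ r : ℝ} (hu : ‖u‖ = 1) (hw : ‖w‖ = s)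
    (hρ : 0 ≤ ρ) (hρr : ρ ≤ r) (hrs : r < s) {n : ℕ} (hn : 1 ≤ n) :
    ‖w / (w - r * u) ^ (n + 1)‖
      ≤ s * (s - ρ) / ((s - r) ^ (n + 1) * (s + ρ)) * poissonKernel 0 (ρ * u) w := by
  obtain ⟨n, rfl⟩ := Nat.exists_eq_add_of_le' hn
  have hsr : 0 < s - r := sub_pos.2 hrs
  have hsρ : 0 < s - ρ := by linarith
  have hnorm : ∀ t : ℝ, 0 ≤ t → t < s → s - t ≤ ‖w - t * u‖ := fun t ht hts => by
    calc s - t = ‖w‖ - ‖(t : ℂ) * u‖ := by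
          rw [hw, norm_mul, hu, Complex.norm_real, Real.norm_of_nonneg ht, mul_one]
      _ ≤ ‖w - t * u‖ := norm_sub_norm_le _ _
  set d := ‖w - r * u‖
  set e := ‖w - ρ * u‖
  have hd : s - r ≤ d := hnorm r (hρ.trans hρr) hrs
  have he : 0 < e := hsρ.trans_le (hnorm ρ hρ (hρr.trans_lt hrs))
  have hratio : e * (s - r) ≤ (s - ρ) * d := by
    simpa only [real_smul] using norm_sub_smul_mul_le hu hw hρ hρr hrs
  have hkey : e ^ 2 * (s - r) ^ (n + 1 + 1) ≤ (s - ρ) ^ 2 * d ^ (n + 1 + 1) :=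
    calc e ^ 2 * (s - r) ^ (n + 1 + 1) = (e * (s - r)) ^ 2 * (s - r) ^ n := by ring
      _ ≤ ((s - ρ) * d) ^ 2 * d ^ n := by gcongr
      _ = (s - ρ) ^ 2 * d ^ (n + 1 + 1) := by ring
  have hP : poissonKernel 0 (ρ * u) w = (s - ρ) * (s + ρ) / e ^ 2 := by
    rw [poissonKernel_def]
    simp only [sub_zero, hw, norm_mul, hu, Complex.norm_real, Real.norm_of_nonneg hρ, mul_one]
    ring
  have hs : 0 < s := by linarith
  have hρs : 0 < s + ρ := by linarith
  have hrhs : s * (s - ρ) / ((s - r) ^ (n + 1 + 1) * (s + ρ)) * ((s - ρ) * (s + ρ) / e ^ 2)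
      = s * (s - ρ) ^ 2 / ((s - r) ^ (n + 1 + 1) * e ^ 2) := by
    field_simp
  rw [norm_div, norm_pow, hw, hP, hrhs, div_le_div_iff₀ (pow_pos (hsr.trans_le hd) _)
    (by positivity)]
  nlinarith [mul_le_mul_of_nonneg_left hkey hs.le]

theorem AnalyticOnNhd.iteratedDeriv_eq_circleAverage_re {f : ℂ → ℂ} {z : ℂ} {R : ℝ}
    (hf : AnalyticOnNhd ℂ f (closedBall 0 R)) (hz : z ∈ ball 0 R) {n : ℕ} (hn : 1 ≤ n) :
    iteratedDeriv n f z
      = n.factorial *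
          Real.circleAverage (fun w => w / (w - z) ^ (n + 1) * (2 * (f w).re : ℝ)) 0 R := by
  obtain ⟨n, rfl⟩ := Nat.exists_eq_add_of_le' hn
  have hR : 0 < R := dist_nonneg.trans_lt (mem_ball.1 hz)
  have hkernel : ContinuousOn (fun w => w / (w - z) ^ (n + 1 + 1)) (sphere 0 |R|) := by
    refine continuousOn_id.div (by fun_prop) fun w hw => pow_ne_zero _ (sub_ne_zero.2 ?_)
    rintro rfl
    exact (mem_ball.1 hz).ne (by rwa [abs_of_pos hR] at hw)
  have hfc : ContinuousOn f (sphere 0 |R|) := by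
    rw [abs_of_pos hR]
    exact hf.continuousOn.mono sphere_subset_closedBall
  have hsplit : Set.EqOn (fun w => w / (w - z) ^ (n + 1 + 1) * (2 * (f w).re : ℝ))
      ((fun w => ((w - 0) / (w - z) ^ (n + 1 + 1)) • f w)
        + fun w => w / (w - z) ^ (n + 1 + 1) * conj (f w)) (sphere 0 |R|) := fun w _ => by
    simp only [Pi.add_apply, sub_zero, smul_eq_mul, ← mul_add, add_conj]
  have hint₁ : CircleIntegrable (fun w => ((w - 0) / (w - z) ^ (n + 1 + 1)) • f w) 0 R :=
    ContinuousOn.circleIntegrable' <| by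
      simpa only [sub_zero, smul_eq_mul] using hkernel.fun_mul hfc
  have hint₂ : CircleIntegrable (fun w => w / (w - z) ^ (n + 1 + 1) * conj (f w)) 0 R :=
    (hkernel.fun_mul (continuous_conj.comp_continuousOn hfc)).circleIntegrable'
  rw [circleAverage_congr_sphere hsplit, circleAverage_add hint₁ hint₂,
    hf.circleAverage_sub_center_div_sub_pow_smul hz,
    hf.differentiableOn.circleAverage_div_sub_pow_mul_conj_eq_zero hz n, add_zero, smul_eq_mul,
    mul_inv_cancel_left₀ (Nat.cast_ne_zero.2 (Nat.factorial_ne_zero _))]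

theorem AnalyticOnNhd.norm_iteratedDeriv_le_of_re_nonneg {f : ℂ → ℂ} {u : ℂ} {s ρ r : ℝ}
    (hf : AnalyticOnNhd ℂ f (closedBall 0 s)) (hre : ∀ w ∈ sphere (0 : ℂ) s, 0 ≤ (f w).re)
    (hu : ‖u‖ = 1) (hρ : 0 ≤ ρ) (hρr : ρ ≤ r) (hrs : r < s) {n : ℕ} (hn : 1 ≤ n) :
    ‖iteratedDeriv n f (r * u)‖
      ≤ 2 * n.factorial * s * (s - ρ) / ((s - r) ^ (n + 1) * (s + ρ)) * (f (ρ * u)).re := by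
  set M := s * (s - ρ) / ((s - r) ^ (n + 1) * (s + ρ)) with hM
  have hs : 0 < s := by linarith
  have hmem : ∀ t : ℝ, 0 ≤ t → t < s → (t * u : ℂ) ∈ ball 0 s := fun t ht hts => by
    rwa [mem_ball_zero_iff, norm_mul, hu, Complex.norm_real, Real.norm_of_nonneg ht, mul_one]
  have ha := hmem ρ hρ (by linarith)
  have hpoisson := InnerProductSpace.HarmonicOnNhd.circleAverage_poissonKernel_smul
    (fun w hw => (hf w hw).harmonicAt_re) ha
  have hint : CircleIntegrable (poissonKernel 0 (ρ * u) • fun w => (f w).re) 0 s := by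
    refine ContinuousOn.circleIntegrable' (ContinuousOn.smul ?_ ?_)
    · rw [poissonKernel_eq_re_herglotzRieszKernel]
      exact continuous_re.comp_continuousOn (continuousOn_herglotzRieszKernel_sphere ha)
    · rw [abs_of_pos hs]
      exact continuous_re.comp_continuousOn (hf.continuousOn.mono sphere_subset_closedBall)
  calc ‖iteratedDeriv n f (r * u)‖
      = n.factorial * ‖Real.circleAverage
          (fun w => w / (w - r * u) ^ (n + 1) * (2 * (f w).re : ℝ)) 0 s‖ := by
        rw [hf.iteratedDeriv_eq_circleAverage_re (hmem r (hρ.trans hρr) hrs) hn, norm_mul,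
          Complex.norm_natCast]
    _ ≤ n.factorial * Real.circleAverage
          (fun w => (2 * M) • (poissonKernel 0 (ρ * u) • fun w => (f w).re) w) 0 s := by
        gcongr
        refine Real.norm_circleAverage_le (hint.const_smul (a := 2 * M)) fun w hw => ?_
        rw [abs_of_pos hs, mem_sphere_zero_iff_norm] at hw
        have hw' := hre w (mem_sphere_zero_iff_norm.2 hw)
        rw [norm_mul, Complex.norm_real, Real.norm_of_nonneg (by positivity)]
        change _ ≤ 2 * M * (poissonKernel 0 (ρ * u) w * (f w).re)
        have := norm_div_sub_pow_le_poissonKernel hu hw hρ hρr hrs hn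
        nlinarith
    _ = 2 * n.factorial * s * (s - ρ) / ((s - r) ^ (n + 1) * (s + ρ)) * (f (ρ * u)).re := by
        rw [circleAverage_fun_smul, hpoisson, smul_eq_mul, hM]
        ring

theorem stmt0_general (R r ra θ : ℝ) (f : ℂ → ℂ)
    (h1 : 0 ≤ ra) (h2 : ra ≤ r) (h3 : r < R)
    (hf : DifferentiableOn ℂ f (ball 0 R))
    (hpos : ∀ w ∈ ball (0:ℂ) R, 0 < (f w).re)
    (z a : ℂ) (hz : z = (r : ℂ) * exp (θ * I)) (ha : a = (ra : ℂ) * exp (θ * I))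
    (n : ℕ) (hn : 1 ≤ n) :
    ‖iteratedDeriv n f z‖ ≤
      2 * n.factorial * R * (R - ra) / ((R - r) ^ (n + 1) * (R + ra)) * (f a).re := by
  subst hz ha
  set B : ℝ → ℝ := fun s =>
    2 * n.factorial * s * (s - ra) / ((s - r) ^ (n + 1) * (s + ra)) * (f (ra * exp (θ * I))).re
  have hbound : ∀ s ∈ Set.Ioo r R, ‖iteratedDeriv n f (r * exp (θ * I))‖ ≤ B s :=
    fun s hs => ((hf.analyticOnNhd isOpen_ball).mono (closedBall_subset_ball hs.2))
      |>.norm_iteratedDeriv_le_of_re_nonneg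
        (fun w hw => (hpos w (sphere_subset_ball hs.2 hw)).le) (norm_exp_ofReal_mul_I θ)
        h1 h2 hs.1 hn
  have hcont : ContinuousAt B R := by
    have : (R - r) ^ (n + 1) * (R + ra) ≠ 0 :=
      mul_ne_zero (pow_ne_zero _ (sub_pos.2 h3).ne') (by linarith)
    fun_prop (disch := exact this)
  exact ge_of_tendsto (hcont.tendsto.mono_left nhdsWithin_le_nhds)
    (Filter.eventually_of_mem (Ioo_mem_nhdsLT h3) hbound)

theorem stmt0 (R r ra θ : ℝ) (f : ℂ → ℂ)
    (hR : 0 < R) (h1 : 0 ≤ ra) (h2 : ra ≤ r) (h3 : r < R)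
    (hf : DifferentiableOn ℂ f (ball 0 R))
    (hpos : ∀ w ∈ ball (0:ℂ) R, 0 < (f w).re)
    (z a : ℂ) (hz : z = (r : ℂ) * exp (θ * I)) (ha : a = (ra : ℂ) * exp (θ * I))
    (n : ℕ) (hn : 1 ≤ n) :
    ‖iteratedDeriv n f z‖ ≤
      2 * n.factorial * R * (R - ra) / ((R - r) ^ (n + 1) * (R + ra)) * (f a).re :=
  stmt0_general R r ra θ f h1 h2 h3 hf hpos z a hz ha n hn
end

section
/- Let f be holomorphic on the disc D_R with sup_{|ζ|<R} Re f(ζ) = M < ∞. Let z = r e^{iθ} and a = r_a e^{iθ} with 0 ≤ r_a ≤ r < R. Then for every n ≥ 1, |f^{(n)}(z)| ≤ (2 n! R (R - r_a)) / ((R - r)^{n+1} (R + r_a)) · (M - Re f(a)). -/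
/-
Fix `r < ρ < R`. Adding the Cauchy formula for `f` to the conjugate of the mean value formula for
`ρ² f(ζ) / (ρ² - conj w ζ)` gives the Schwarz-type formula
`f w + conj (f 0) = avg_{|ζ| = ρ} ζ / (ζ - w) · 2 Re f(ζ)`, and differentiating `n ≥ 1` times
`f⁽ⁿ⁾(z) = n! avg_{|ζ| = ρ} ζ / (ζ - z)^(n+1) · 2 Re f(ζ)`. Apply this to `M - f`, whose real part
is nonnegative. When `z` and `a` lie on a common ray, `(ρ - |z|) |ζ - a| ≤ (ρ - |a|) |ζ - z|`, so
the kernel `|ζ / (ζ - z)^(n+1)|` is at most `ρ (ρ - |a|) / ((ρ - |z|)^(n+1) (ρ + |a|))` times the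
Poisson kernel `P_a(ζ)`, and the Poisson formula evaluates `avg P_a · Re (M - f)` as `M - Re f(a)`.
Finally let `ρ → R`.
-/

open Complex ComplexConjugate Metric Real MeasureTheory Set Filter Topology
open scoped Nat

theorem mul_norm_sub_smul_le {E : Type*} [NormedAddCommGroup E] [InnerProductSpace ℝ E]
    {ζ e : E} {ρ r s : ℝ} (hζ : ‖ζ‖ = ρ) (he : ‖e‖ = 1) (hs : 0 ≤ s) (hsr : s ≤ r)
    (hrρ : r ≤ ρ) :
    (ρ - r) * ‖ζ - s • e‖ ≤ (ρ - s) * ‖ζ - r • e‖ := by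
  have hinner : inner ℝ ζ e ≤ ρ := by
    simpa [hζ, he] using real_inner_le_norm ζ e
  have hsq (t : ℝ) : ‖ζ - t • e‖ ^ 2 = ρ ^ 2 - 2 * t * inner ℝ ζ e + t ^ 2 := by
    rw [norm_sub_sq_real, inner_smul_right, norm_smul, hζ, he, Real.norm_eq_abs, mul_one, sq_abs]
    ring
  have hfactor : 0 ≤ r * (ρ - s) ^ 2 - s * (ρ - r) ^ 2 := by
    have : r * (ρ - s) ^ 2 - s * (ρ - r) ^ 2 = (r - s) * (ρ ^ 2 - r * s) := by ring
    rw [this]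
    exact mul_nonneg (by linarith) (by nlinarith)
  refine (pow_le_pow_iff_left₀ (by nlinarith [norm_nonneg (ζ - s • e)])
    (by nlinarith [norm_nonneg (ζ - r • e)]) two_ne_zero).1 ?_
  rw [mul_pow, mul_pow, hsq, hsq]
  nlinarith [mul_nonneg (sub_nonneg.2 hinner) hfactor]

theorem norm_div_sub_pow_le_mul_poissonKernel {ζ e : ℂ} {ρ r s : ℝ} (hζ : ‖ζ‖ = ρ)
    (he : ‖e‖ = 1) (hs : 0 ≤ s) (hsr : s ≤ r) (hrρ : r < ρ) {n : ℕ} (hn : n ≠ 0) :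
    ‖ζ / (ζ - r • e) ^ (n + 1)‖
      ≤ ρ * (ρ - s) / ((ρ - r) ^ (n + 1) * (ρ + s)) * poissonKernel 0 (s • e) ζ := by
  obtain ⟨m, rfl⟩ : ∃ m, n = m + 1 := ⟨n - 1, by omega⟩
  have hnorm (t : ℝ) (ht : 0 ≤ t) : ‖t • e‖ = t := by
    rw [norm_smul, he, mul_one, Real.norm_of_nonneg ht]
  have hdist_le (t : ℝ) (ht : 0 ≤ t) : ρ - t ≤ ‖ζ - t • e‖ := by
    have := norm_sub_norm_le ζ (t • e)
    rwa [hζ, hnorm t ht] at this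
  have hρr : 0 < ρ - r := by linarith
  have hz : ρ - r ≤ ‖ζ - r • e‖ := hdist_le r (hs.trans hsr)
  have ha : 0 < ‖ζ - s • e‖ := by linarith [hdist_le s hs]
  have hρs : 0 < ρ - s := by linarith
  have hρ : 0 < ρ := by linarith
  have hz' : 0 < ‖ζ - r • e‖ := hρr.trans_le hz
  simp only [poissonKernel_def, sub_zero]
  rw [hζ, hnorm s hs, norm_div, norm_pow, hζ,
    div_mul_div_comm, div_le_div_iff₀ (by positivity) (by positivity)]
  calc ρ * ((ρ - r) ^ (m + 1 + 1) * (ρ + s) * ‖ζ - s • e‖ ^ 2)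
      = ρ * (ρ + s) * ((ρ - r) * ‖ζ - s • e‖) ^ 2 * (ρ - r) ^ m := by ring
    _ ≤ ρ * (ρ + s) * ((ρ - s) * ‖ζ - r • e‖) ^ 2 * ‖ζ - r • e‖ ^ m := by
      gcongr ρ * (ρ + s) * ?_ ^ 2 * ?_ ^ m
      exact mul_norm_sub_smul_le hζ he hs hsr hrρ.le
    _ = ρ * (ρ - s) * (ρ ^ 2 - s ^ 2) * ‖ζ - r • e‖ ^ (m + 1 + 1) := by ring

theorem norm_circleAverage_le_of_norm_le {E : Type*} [NormedAddCommGroup E] [NormedSpace ℝ E]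
    {F : ℂ → E} {B : ℂ → ℝ} {c : ℂ} {R : ℝ} (hB : CircleIntegrable B c R)
    (h : ∀ ζ ∈ sphere c |R|, ‖F ζ‖ ≤ B ζ) :
    ‖circleAverage F c R‖ ≤ circleAverage B c R := by
  rw [circleAverage_def, circleAverage_def, norm_smul, smul_eq_mul,
    Real.norm_of_nonneg (by positivity)]
  gcongr
  exact intervalIntegral.norm_integral_le_of_norm_le two_pi_pos.le
    (.of_forall fun θ _ ↦ h _ (circleMap_mem_sphere' c R θ)) hB

section CauchyKernel

variable {E : Type*} [NormedAddCommGroup E] [NormedSpace ℂ E] {g : ℂ → E} {ρ : ℝ} {w : ℂ}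

theorem DiffContOnCl.continuousOn_sphere {f : ℂ → E} {c : ℂ} {R : ℝ}
    (hf : DiffContOnCl ℂ f (ball c R)) (hR : 0 ≤ R) : ContinuousOn f (sphere c |R|) := by
  rw [abs_of_nonneg hR]
  exact hf.continuousOn_ball.mono sphere_subset_closedBall

theorem exists_pos_forall_le_norm_circleMap_sub (hw : w ∈ ball (0 : ℂ) ρ) :
    ∃ d > 0, ∀ x ∈ ball w d, ∀ θ : ℝ, d ≤ ‖circleMap 0 ρ θ - x‖ := by
  have hw' : ‖w‖ < ρ := mem_ball_zero_iff.1 hw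
  refine ⟨(ρ - ‖w‖) / 2, by linarith, fun x hx θ ↦ ?_⟩
  have hxw : ‖x‖ ≤ ‖w‖ + ‖x - w‖ := by simpa [add_comm] using norm_add_le (x - w) w
  have := norm_sub_norm_le (circleMap 0 ρ θ) x
  rw [norm_circleMap_zero, abs_of_pos ((norm_nonneg w).trans_lt hw')] at this
  linarith [mem_ball_iff_norm.1 hx]

theorem continuousOn_div_sub_pow_sphere (hw : w ∈ ball (0 : ℂ) ρ) (k : ℕ) :
    ContinuousOn (fun ζ : ℂ ↦ ζ / (ζ - w) ^ k) (sphere 0 |ρ|) := by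
  refine ContinuousOn.div (by fun_prop) (by fun_prop) fun ζ hζ ↦ pow_ne_zero _ ?_
  rw [abs_of_pos (pos_of_mem_ball hw), mem_sphere_zero_iff_norm] at hζ
  exact sub_ne_zero.2 (by rintro rfl; linarith [mem_ball_zero_iff.1 hw])

theorem hasDerivAt_div_sub_pow {ζ x : ℂ} (h : ζ - x ≠ 0) (k : ℕ) :
    HasDerivAt (fun x ↦ ζ / (ζ - x) ^ (k + 1)) (((k : ℂ) + 1) * (ζ / (ζ - x) ^ (k + 2))) x := by
  have hpow : HasDerivAt (fun y ↦ (ζ - y) ^ (k + 1)) (-(((k : ℂ) + 1) * (ζ - x) ^ k)) x := by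
    simpa using ((hasDerivAt_id x).const_sub ζ).fun_pow (k + 1)
  refine ((hpow.inv (pow_ne_zero _ h)).const_mul ζ).congr_deriv ?_
  field_simp
  ring

theorem hasDerivAt_circleAverage_div_sub_pow_smul (hg : CircleIntegrable g 0 ρ)
    (hw : w ∈ ball (0 : ℂ) ρ) (k : ℕ) :
    HasDerivAt (fun w ↦ circleAverage (fun ζ ↦ (ζ / (ζ - w) ^ (k + 1)) • g ζ) 0 ρ)
      (((k : ℂ) + 1) • circleAverage (fun ζ ↦ (ζ / (ζ - w) ^ (k + 2)) • g ζ) 0 ρ) w := by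
  have hρ : 0 < ρ := pos_of_mem_ball hw
  obtain ⟨d, hd, hdist⟩ := exists_pos_forall_le_norm_circleMap_sub hw
  have hgm : AEStronglyMeasurable (fun θ ↦ g (circleMap 0 ρ θ))
      (volume.restrict (uIoc 0 (2 * π))) := (intervalIntegrable_iff.1 hg).aestronglyMeasurable
  have hasDerivAt_integral := intervalIntegral.hasDerivAt_integral_of_dominated_loc_of_deriv_le
    (F := fun x θ ↦ (circleMap 0 ρ θ / (circleMap 0 ρ θ - x) ^ (k + 1)) • g (circleMap 0 ρ θ))
    (F' := fun x θ ↦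
      (((k : ℂ) + 1) * (circleMap 0 ρ θ / (circleMap 0 ρ θ - x) ^ (k + 2))) • g (circleMap 0 ρ θ))
    (bound := fun θ ↦ (k + 1) * ρ / d ^ (k + 2) * ‖g (circleMap 0 ρ θ)‖) (a := 0) (b := 2 * π)
    (μ := volume)
    (ball_mem_nhds w hd) ?meas ?int ?meas' ?bound ?int_bound ?diff
  case meas =>
    exact .of_forall fun x ↦ (Measurable.aestronglyMeasurable (by fun_prop)).smul hgm
  case int =>
    simpa only [CircleIntegrable, Pi.smul_apply'] using
      hg.continuousOn_smul (continuousOn_div_sub_pow_sphere hw (k + 1))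
  case meas' =>
    exact (Measurable.aestronglyMeasurable (by fun_prop)).smul hgm
  case bound =>
    refine .of_forall fun θ _ x hx ↦ ?_
    rw [norm_smul, norm_mul, norm_div, norm_circleMap_zero, abs_of_pos hρ, norm_pow]
    have : ‖(k : ℂ) + 1‖ = k + 1 := by norm_cast
    rw [this, mul_div_assoc]
    gcongr
    exact hdist x hx θ
  case int_bound =>
    exact (IntervalIntegrable.norm hg).const_mul _
  case diff =>
    refine .of_forall fun θ _ x hx ↦ ?_
    have hne : circleMap 0 ρ θ - x ≠ 0 := norm_pos_iff.1 (hd.trans_le (hdist x hx θ))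
    exact (hasDerivAt_div_sub_pow hne k).smul_const _
  unfold Real.circleAverage
  refine (hasDerivAt_integral.2.const_smul (2 * π)⁻¹).congr_deriv ?_
  rw [smul_comm]
  simp only [mul_smul, intervalIntegral.integral_smul]

theorem iteratedDeriv_circleAverage_div_sub_smul (hg : CircleIntegrable g 0 ρ) (n : ℕ)
    (hw : w ∈ ball (0 : ℂ) ρ) :
    iteratedDeriv n (fun w ↦ circleAverage (fun ζ ↦ (ζ / (ζ - w)) • g ζ) 0 ρ) w
      = (n ! : ℂ) • circleAverage (fun ζ ↦ (ζ / (ζ - w) ^ (n + 1)) • g ζ) 0 ρ := by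
  induction n generalizing w with
  | zero => simp
  | succ n ih =>
    have hev : iteratedDeriv n (fun w ↦ circleAverage (fun ζ ↦ (ζ / (ζ - w)) • g ζ) 0 ρ)
        =ᶠ[𝓝 w] fun x ↦ (n ! : ℂ) • circleAverage (fun ζ ↦ (ζ / (ζ - x) ^ (n + 1)) • g ζ) 0 ρ :=
      eventually_of_mem (isOpen_ball.mem_nhds hw) fun x hx ↦ ih hx
    rw [iteratedDeriv_succ, hev.deriv_eq,
      ((hasDerivAt_circleAverage_div_sub_pow_smul hg hw n).fun_const_smul (n ! : ℂ)).deriv,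
      smul_smul, Nat.factorial_succ]
    congr 1
    push_cast
    ring

end CauchyKernel

section Holomorphic

variable {f : ℂ → ℂ} {ρ : ℝ} {w : ℂ}

theorem circleAverage_div_sub_smul_conj (hf : DiffContOnCl ℂ f (ball 0 ρ))
    (hw : w ∈ ball (0 : ℂ) ρ) :
    circleAverage (fun ζ ↦ (ζ / (ζ - w)) • conj (f ζ)) 0 ρ = conj (f 0) := by
  have hρ : 0 < ρ := pos_of_mem_ball hw
  have hw' : ‖w‖ < ρ := mem_ball_zero_iff.1 hw
  have hden (ζ : ℂ) (hζ : ‖ζ‖ ≤ ρ) : (ρ : ℂ) ^ 2 - conj w * ζ ≠ 0 := by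
    intro h
    have : ‖conj w * ζ‖ = ρ ^ 2 := by
      rw [← sub_eq_zero.1 h, ← ofReal_pow, norm_real, Real.norm_of_nonneg (by positivity)]
    rw [norm_mul, RCLike.norm_conj] at this
    nlinarith [norm_nonneg w, norm_nonneg ζ]
  -- On the circle `conj ζ = ρ² / ζ`, so the integrand is `conj ∘ h` with `h` holomorphic.
  set h : ℂ → ℂ := fun ζ ↦ ((ρ : ℂ) ^ 2 / ((ρ : ℂ) ^ 2 - conj w * ζ)) • f ζ with h_def
  have hh : DiffContOnCl ℂ h (ball 0 |ρ|) := by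
    rw [abs_of_pos hρ]
    refine DiffContOnCl.smul (DifferentiableOn.diffContOnCl fun ζ hζ ↦ ?_) hf
    rw [closure_ball 0 hρ.ne', mem_closedBall_zero_iff] at hζ
    have hk : DifferentiableAt ℂ (fun ζ : ℂ ↦ (ρ : ℂ) ^ 2 / ((ρ : ℂ) ^ 2 - conj w * ζ)) ζ := by
      fun_prop (disch := exact hden ζ hζ)
    exact hk.differentiableWithinAt
  have hreflect : EqOn (fun ζ ↦ (ζ / (ζ - w)) • conj (f ζ)) (conj ∘ h) (sphere 0 |ρ|) := by
    intro ζ hζ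
    rw [abs_of_pos hρ, mem_sphere_zero_iff_norm] at hζ
    have hζw : ζ - w ≠ 0 := sub_ne_zero.2 (by rintro rfl; linarith)
    have hden' : (ρ : ℂ) ^ 2 - w * conj ζ ≠ 0 := fun h0 ↦
      hden ζ hζ.le (by simpa using congrArg conj h0)
    have hnorm : ζ * conj ζ = (ρ : ℂ) ^ 2 := by rw [mul_conj', hζ]
    simp only [h_def, Function.comp_apply, smul_eq_mul, map_mul, map_div₀, map_sub, map_pow,
      conj_ofReal, conj_conj]
    congr 1
    rw [div_eq_div_iff hζw hden']
    linear_combination -w * hnorm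
  have h0 : h 0 = f 0 := by simp [h_def, hρ.ne']
  have hint : CircleIntegrable h 0 ρ :=
    (hh.continuousOn_ball.mono sphere_subset_closedBall).circleIntegrable'
  have hcomm := (conjCLE : ℂ →L[ℝ] ℂ).circleAverage_comp_comm hint
  rw [circleAverage_congr_sphere hreflect, ← h0, ← hh.circleAverage]
  exact hcomm

theorem circleAverage_div_sub_smul_add_conj (hf : DiffContOnCl ℂ f (ball 0 ρ))
    (hw : w ∈ ball (0 : ℂ) ρ) :
    circleAverage (fun ζ ↦ (ζ / (ζ - w)) • (f ζ + conj (f ζ))) 0 ρ = f w + conj (f 0) := by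
  have hρ : 0 < ρ := pos_of_mem_ball hw
  have hf' : DiffContOnCl ℂ f (ball 0 |ρ|) := by rwa [abs_of_pos hρ]
  have hK : ContinuousOn (fun ζ : ℂ ↦ ζ / (ζ - w)) (sphere 0 |ρ|) := by
    simpa using continuousOn_div_sub_pow_sphere hw 1
  have hfc := hf.continuousOn_sphere hρ.le
  have hint : CircleIntegrable (fun ζ ↦ (ζ / (ζ - w)) • f ζ) 0 ρ :=
    hfc.circleIntegrable'.continuousOn_smul hK
  have hint_conj : CircleIntegrable (fun ζ ↦ (ζ / (ζ - w)) • conj (f ζ)) 0 ρ :=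
    (continuous_conj.comp_continuousOn hfc).circleIntegrable'.continuousOn_smul hK
  simp_rw [smul_add]
  rw [circleAverage_fun_add hint hint_conj, circleAverage_div_sub_smul_conj hf hw]
  simpa using congrArg (· + conj (f 0)) (hf'.circleAverage_smul_div (by rwa [abs_of_pos hρ]))

theorem iteratedDeriv_eq_factorial_smul_circleAverage {z : ℂ} (hf : DiffContOnCl ℂ f (ball 0 ρ))
    (hz : z ∈ ball (0 : ℂ) ρ) {n : ℕ} (hn : n ≠ 0) :
    iteratedDeriv n f z
      = (n ! : ℂ) • circleAverage (fun ζ ↦ (ζ / (ζ - z) ^ (n + 1)) • (f ζ + conj (f ζ))) 0 ρ := by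
  have hρ : 0 < ρ := pos_of_mem_ball hz
  have hfc := hf.continuousOn_sphere hρ.le
  have hg : CircleIntegrable (fun ζ ↦ f ζ + conj (f ζ)) 0 ρ :=
    (hfc.add (continuous_conj.comp_continuousOn hfc)).circleIntegrable'
  have hev : (fun w ↦ circleAverage (fun ζ ↦ (ζ / (ζ - w)) • (f ζ + conj (f ζ))) 0 ρ)
      =ᶠ[𝓝 z] fun w ↦ conj (f 0) + f w :=
    eventually_of_mem (isOpen_ball.mem_nhds hz) fun w hw ↦
      (circleAverage_div_sub_smul_add_conj hf hw).trans (add_comm _ _)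
  rw [← iteratedDeriv_circleAverage_div_sub_smul hg n hz, hev.iteratedDeriv_eq,
    iteratedDeriv_const_add (Nat.pos_of_ne_zero hn)]

theorem continuousOn_poissonKernel_sphere {a : ℂ} (ha : a ∈ ball (0 : ℂ) ρ) :
    ContinuousOn (poissonKernel 0 a) (sphere 0 |ρ|) := by
  rw [poissonKernel_eq_re_herglotzRieszKernel]
  exact continuous_re.comp_continuousOn (continuousOn_herglotzRieszKernel_sphere ha)

theorem circleAverage_poissonKernel_smul_re {a : ℂ}
    (hf : DiffContOnCl ℂ f (ball 0 ρ)) (ha : a ∈ ball (0 : ℂ) ρ) :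
    circleAverage (poissonKernel 0 a • fun ζ ↦ (f ζ).re) 0 ρ = (f a).re := by
  have hρ : 0 < ρ := pos_of_mem_ball ha
  have hfc := hf.continuousOn_sphere hρ.le
  have hcomm := reCLM.circleAverage_comp_comm
    ((hfc.circleIntegrable').continuousOn_smul (continuousOn_poissonKernel_sphere ha))
  rw [hf.circleAverage_poissonKernel_smul ha, reCLM_apply] at hcomm
  rw [← hcomm]
  congr 1
  ext ζ
  simp

theorem norm_iteratedDeriv_le_of_re_nonneg {r s : ℝ} {e : ℂ}
    (hf : DiffContOnCl ℂ f (ball 0 ρ)) (hre : ∀ ζ ∈ sphere (0 : ℂ) ρ, 0 ≤ (f ζ).re)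
    (he : ‖e‖ = 1) (hs : 0 ≤ s) (hsr : s ≤ r) (hrρ : r < ρ) {n : ℕ} (hn : n ≠ 0) :
    ‖iteratedDeriv n f (r • e)‖
      ≤ 2 * n ! * ρ * (ρ - s) / ((ρ - r) ^ (n + 1) * (ρ + s)) * (f (s • e)).re := by
  have hρ : 0 < ρ := by linarith
  have hmem (t : ℝ) (ht : 0 ≤ t) (htρ : t < ρ) : t • e ∈ ball (0 : ℂ) ρ := by
    rwa [mem_ball_zero_iff, norm_smul, he, mul_one, Real.norm_of_nonneg ht]
  have ha := hmem s hs (by linarith)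
  set c := ρ * (ρ - s) / ((ρ - r) ^ (n + 1) * (ρ + s))
  have hfc := hf.continuousOn_sphere hρ.le
  have hB : CircleIntegrable ((2 * c) • (poissonKernel 0 (s • e) • fun ζ ↦ (f ζ).re)) 0 ρ :=
    ((continuous_re.comp_continuousOn hfc).circleIntegrable'.continuousOn_smul
      (continuousOn_poissonKernel_sphere ha)).const_smul
  have hpointwise : ∀ ζ ∈ sphere (0 : ℂ) |ρ|,
      ‖(ζ / (ζ - r • e) ^ (n + 1)) • (f ζ + conj (f ζ))‖
        ≤ ((2 * c) • (poissonKernel 0 (s • e) • fun ζ ↦ (f ζ).re)) ζ := by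
    intro ζ hζ
    rw [abs_of_pos hρ, mem_sphere_zero_iff_norm] at hζ
    have hre_ζ := hre ζ (mem_sphere_zero_iff_norm.2 hζ)
    rw [norm_smul, add_conj, norm_real, Real.norm_of_nonneg (by positivity)]
    simp only [Pi.smul_apply, Pi.mul_apply, smul_eq_mul]
    calc _ ≤ c * poissonKernel 0 (s • e) ζ * (2 * (f ζ).re) := by
          gcongr
          exact norm_div_sub_pow_le_mul_poissonKernel hζ he hs hsr hrρ hn
      _ = _ := by ring
  rw [iteratedDeriv_eq_factorial_smul_circleAverage hf (hmem r (hs.trans hsr) hrρ) hn, norm_smul,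
    _root_.norm_natCast]
  calc (n ! : ℝ) * ‖circleAverage (fun ζ ↦ (ζ / (ζ - r • e) ^ (n + 1)) • (f ζ + conj (f ζ))) 0 ρ‖
      ≤ n ! * circleAverage ((2 * c) • (poissonKernel 0 (s • e) • fun ζ ↦ (f ζ).re)) 0 ρ := by
        gcongr
        exact norm_circleAverage_le_of_norm_le hB hpointwise
    _ = 2 * n ! * c * (f (s • e)).re := by
        rw [circleAverage_smul, circleAverage_poissonKernel_smul_re hf ha, smul_eq_mul]
        ring
    _ = _ := by simp only [c]; ring

end Holomorphic

theorem stmt1_general (R r ra θ M : ℝ) (f : ℂ → ℂ)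
    (h1 : 0 ≤ ra) (h2 : ra ≤ r) (h3 : r < R)
    (hf : DifferentiableOn ℂ f (ball 0 R))
    (hM : IsLUB ((fun w => (f w).re) '' ball (0:ℂ) R) M)
    (z a : ℂ) (hz : z = (r : ℂ) * exp (θ * I)) (ha : a = (ra : ℂ) * exp (θ * I))
    (n : ℕ) (hn : 1 ≤ n) :
    ‖iteratedDeriv n f z‖ ≤
      2 * n.factorial * R * (R - ra) / ((R - r) ^ (n + 1) * (R + ra)) * (M - (f a).re) := by
  have he := norm_exp_ofReal_mul_I θ
  generalize exp (θ * I) = e at hz ha he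
  rw [hz, ha, ← real_smul, ← real_smul]
  have hbound : ∀ ρ ∈ Ioo r R, ‖iteratedDeriv n f (r • e)‖
      ≤ 2 * n ! * ρ * (ρ - ra) / ((ρ - r) ^ (n + 1) * (ρ + ra)) * (M - (f (ra • e)).re) := by
    intro ρ hρ
    have hsub : closedBall (0 : ℂ) ρ ⊆ ball 0 R := closedBall_subset_ball hρ.2
    have hre : ∀ ζ ∈ sphere (0 : ℂ) ρ, 0 ≤ ((M : ℂ) - f ζ).re := fun ζ hζ ↦ by
      simpa using hM.1 ⟨ζ, hsub (sphere_subset_closedBall hζ), rfl⟩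
    simpa [iteratedDeriv_const_sub (by omega : 0 < n)] using
      norm_iteratedDeriv_le_of_re_nonneg ((hf.diffContOnCl_ball hsub).const_sub (M : ℂ)) hre
        he h1 h2 hρ.1 (n := n) (by omega)
  have hcont : ContinuousAt (fun ρ ↦ 2 * n ! * ρ * (ρ - ra) / ((ρ - r) ^ (n + 1) * (ρ + ra))
      * (M - (f (ra • e)).re)) R := by
    have : (R - r) ^ (n + 1) * (R + ra) ≠ 0 := (mul_pos (pow_pos (sub_pos.2 h3) _) (by linarith)).ne'
    fun_prop (disch := exact this)
  exact ge_of_tendsto (hcont.tendsto.mono_left nhdsWithin_le_nhds)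
    (eventually_of_mem (Ioo_mem_nhdsLT h3) hbound)

theorem stmt1 (R r ra θ M : ℝ) (f : ℂ → ℂ)
    (hR : 0 < R) (h1 : 0 ≤ ra) (h2 : ra ≤ r) (h3 : r < R)
    (hf : DifferentiableOn ℂ f (ball 0 R))
    (hM : IsLUB ((fun w => (f w).re) '' ball (0:ℂ) R) M)
    (z a : ℂ) (hz : z = (r : ℂ) * exp (θ * I)) (ha : a = (ra : ℂ) * exp (θ * I))
    (n : ℕ) (hn : 1 ≤ n) :
    ‖iteratedDeriv n f z‖ ≤
      2 * n.factorial * R * (R - ra) / ((R - r) ^ (n + 1) * (R + ra)) * (M - (f a).re) :=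
  stmt1_general R r ra θ M f h1 h2 h3 hf hM z a hz ha n hn
end

section
/- Let f be holomorphic on D_R with f(D_R) ⊆ G, where G ⊆ ℂ is a domain with convex hull G̃ ≠ ℂ. Then for every n ≥ 1 and every z with |z| = r < R, |f^{(n)}(z)| ≤ (2 n! R) / (R - r)^{n+1} · dist(f(0), ∂G̃). -/
/-!
Rotate the picture so that a supporting line of the convex hull `H` of `G`, through a boundary
point of `H` nearest to `f 0`, becomes vertical: for some `|α| = 1`, the function `α * f` takes
values in the half-plane `Re ≤ d + Re (α * f 0)`, where `d = dist (f 0, ∂H)`.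

It then suffices to bound `h⁽ⁿ⁾(z)` for `h` holomorphic on the disc with `Re h ≤ A`.
On the circle `|w| = s` we have `conj w = s² / w`, so for `n ≥ 1` the conjugate `conj h`
integrates to zero against `(w - z)⁻⁽ⁿ⁺¹⁾ dw`, and so does the constant `2A`. Cauchy's formula
therefore writes `h⁽ⁿ⁾(z)` as an integral of `(2 Re h - 2A) (w - z)⁻⁽ⁿ⁺¹⁾ dw`, whose modulus is
controlled by the circle average of `A - Re h`, which is `A - Re h(0)` by the mean value property.
Letting `s → R` gives the bound.
-/

open Complex Metric Real ComplexConjugate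

theorem Convex.exists_norm_eq_one_inner_sub_le_infDist_frontier {E : Type*}
    [NormedAddCommGroup E] [InnerProductSpace ℝ E] [ProperSpace E] {C : Set E} (hC : Convex ℝ C)
    (hint : (interior C).Nonempty) (hC_ne : C ≠ Set.univ) (x : E) :
    ∃ v : E, ‖v‖ = 1 ∧ ∀ y ∈ interior C, inner ℝ v (y - x) ≤ infDist x (frontier C) := by
  obtain ⟨p, hp, hpx⟩ := isClosed_frontier.exists_infDist_eq_dist
    (nonempty_frontier_iff.2 ⟨hint.mono interior_subset, hC_ne⟩) x
  obtain ⟨g, hg⟩ := geometric_hahn_banach_open_point hC.interior isOpen_interior hp.2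
  set u := (InnerProductSpace.toDual ℝ E).symm g
  have hu : ∀ y, inner ℝ u y = g y := fun _ => InnerProductSpace.toDual_symm_apply
  have hu0 : u ≠ 0 := by
    obtain ⟨y, hy⟩ := hint
    rintro h
    simpa [← hu, h] using hg y hy
  refine ⟨‖u‖⁻¹ • u, by simp [norm_smul, hu0], fun y hy => ?_⟩
  calc inner ℝ (‖u‖⁻¹ • u) (y - x) ≤ inner ℝ (‖u‖⁻¹ • u) (p - x) := by
        simp only [real_inner_smul_left, inner_sub_right, hu]
        gcongr
        exact (hg y hy).le
    _ ≤ ‖‖u‖⁻¹ • u‖ * ‖p - x‖ := real_inner_le_norm _ _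
    _ = infDist x (frontier C) := by simp [norm_smul, hu0, hpx, dist_eq_norm']

theorem Convex.exists_norm_eq_one_re_mul_sub_le_infDist_frontier {C : Set ℂ} (hC : Convex ℝ C)
    (hint : (interior C).Nonempty) (hC_ne : C ≠ Set.univ) (x : ℂ) :
    ∃ α : ℂ, ‖α‖ = 1 ∧ ∀ y ∈ interior C, (α * (y - x)).re ≤ infDist x (frontier C) := by
  obtain ⟨v, hv, hsep⟩ := hC.exists_norm_eq_one_inner_sub_le_infDist_frontier hint hC_ne x
  refine ⟨conj v, by simpa using hv, fun y hy => ?_⟩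
  simpa [Complex.inner, mul_comm] using hsep y hy

theorem AnalyticAt.iteratedDeriv_succ_eq_smul_iteratedDeriv_dslope {𝕜 E : Type*}
    [NontriviallyNormedField 𝕜] [NormedAddCommGroup E] [NormedSpace 𝕜 E] [CompleteSpace E]
    {f : 𝕜 → E} {z : 𝕜} (hf : AnalyticAt 𝕜 f z) (n : ℕ) :
    iteratedDeriv (n + 1) f z = (n + 1) • iteratedDeriv n (dslope f z) z := by
  obtain ⟨p, _, hp⟩ := hf
  obtain ⟨_, hq⟩ := hp.hasFPowerSeriesAt.has_fpower_series_dslope_fslope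
  rw [iteratedDeriv_eq_iteratedFDeriv, iteratedDeriv_eq_iteratedFDeriv,
    ← hp.factorial_smul 1 (n + 1), ← hq.factorial_smul 1 n, Nat.factorial_succ, mul_smul]
  congr 2
  exact p.coeff_fslope.symm

section CauchyFormula

variable {E : Type*} [NormedAddCommGroup E] [NormedSpace ℂ E]

theorem ContinuousOn.circleIntegrable_one_div_sub_pow_smul {f : ℂ → E} {c z : ℂ} {R : ℝ}
    (hf : ContinuousOn f (sphere c R)) (hz : z ∈ ball c R) (k : ℕ) :
    CircleIntegrable (fun w => (1 / (w - z) ^ k) • f w) c R := by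
  refine ContinuousOn.circleIntegrable (dist_nonneg.trans (mem_ball.1 hz).le) ?_
  refine (continuousOn_const.div ((continuousOn_id.sub continuousOn_const).pow k) ?_).smul hf
  exact fun w hw => pow_ne_zero _ (sub_ne_zero.2 (sphere_disjoint_ball.ne_of_mem hw hz))

variable [CompleteSpace E]

theorem circleIntegral_one_div_sub_pow_smul_eq_zero (c z : ℂ) (R : ℝ) (n : ℕ) (a : E) :
    ∮ w in C(c, R), (1 / (w - z) ^ (n + 2)) • a = 0 := by
  have : (-(n + 2 : ℕ) : ℤ) ≠ -1 := by omega
  simpa [← zpow_natCast, ← zpow_neg] using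
    congrArg (· • a) (circleIntegral.integral_sub_zpow_of_ne this c z R)

theorem DifferentiableOn.circleIntegral_one_div_sub_pow_smul {f : ℂ → E} {c z : ℂ} {R : ℝ}
    (hf : DifferentiableOn ℂ f (closedBall c R)) (hz : z ∈ ball c R) (n : ℕ) :
    ∮ w in C(c, R), (1 / (w - z) ^ (n + 1)) • f w
      = (2 * π * I / n.factorial) • iteratedDeriv n f z := by
  have hz_nhds : closedBall c R ∈ nhds z :=
    Filter.mem_of_superset (isOpen_ball.mem_nhds hz) ball_subset_closedBall
  induction n generalizing f with
  | zero => simpa using hf.circleIntegral_sub_inv_smul hz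
  | succ n ih =>
    have hslope : DifferentiableOn ℂ (dslope f z) (closedBall c R) :=
      (differentiableOn_dslope hz_nhds).2 hf
    have hsplit : Set.EqOn (fun w => (1 / (w - z) ^ (n + 2)) • f w)
        (fun w => (1 / (w - z) ^ (n + 2)) • f z + (1 / (w - z) ^ (n + 1)) • dslope f z w)
        (sphere c R) := by
      intro w hw
      have hwz : w - z ≠ 0 := sub_ne_zero.2 (sphere_disjoint_ball.ne_of_mem hw hz)
      dsimp only
      rw [← sub_add_cancel (f w) (f z), ← sub_smul_dslope f z w, smul_add, smul_smul, add_comm]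
      congr 2
      field_simp
      ring
    rw [circleIntegral.integral_congr (dist_nonneg.trans (mem_ball.1 hz).le) hsplit,
      circleIntegral.integral_add (continuousOn_const.circleIntegrable_one_div_sub_pow_smul hz _)
        ((hslope.continuousOn.mono sphere_subset_closedBall).circleIntegrable_one_div_sub_pow_smul
          hz _),
      circleIntegral_one_div_sub_pow_smul_eq_zero, zero_add, ih hslope,
      (hf.analyticAt hz_nhds).iteratedDeriv_succ_eq_smul_iteratedDeriv_dslope,
      ← Nat.cast_smul_eq_nsmul ℂ, smul_smul, Nat.factorial_succ]
    congr 1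
    push_cast
    field_simp

end CauchyFormula

theorem conj_circleIntegral (f : ℂ → ℂ) (c : ℂ) (R : ℝ) :
    conj (∮ w in C(c, R), f w) = -∮ w in C(c, R), (conj (w - c) / (w - c)) * conj (f w) := by
  rw [circleIntegral, circleIntegral, ← intervalIntegral.intervalIntegral_conj,
    ← intervalIntegral.integral_neg]
  refine intervalIntegral.integral_congr fun θ _ => ?_
  simp only [deriv_circleMap, circleMap_sub_center, smul_eq_mul, map_mul, conj_I]
  rcases eq_or_ne (circleMap 0 R θ) 0 with h | h
  · simp [h]
  · field_simp

theorem DifferentiableOn.circleIntegral_one_div_sub_pow_smul_conj_eq_zero {h : ℂ → ℂ} {s : ℝ}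
    {z : ℂ} (hh : DifferentiableOn ℂ h (closedBall 0 s)) (hz : z ∈ ball 0 s) (n : ℕ) :
    ∮ w in C(0, s), (1 / (w - z) ^ (n + 2)) • conj (h w) = 0 := by
  have hs : 0 < s := pos_of_mem_ball hz
  have hden : ∀ w ∈ closedBall (0 : ℂ) s, (s : ℂ) ^ 2 - conj z * w ≠ 0 := by
    intro w hw h0
    have : ‖conj z * w‖ < s ^ 2 := by
      rw [norm_mul, RCLike.norm_conj, sq]
      exact mul_lt_mul_of_lt_of_le_of_nonneg_of_pos (mem_ball_zero_iff.1 hz)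
        (mem_closedBall_zero_iff.1 hw) (norm_nonneg _) hs
    rw [← sub_eq_zero.1 h0] at this
    simp [abs_of_pos hs] at this
  -- `G w` is `(conj w / w) * conj ((w - z)⁻⁽ⁿ⁺²⁾) * h w` with `conj w` replaced by `s² / w`,
  -- which leaves no pole in the disc because the exponent is at least `2`
  set G : ℂ → ℂ := fun w => (s : ℂ) ^ 2 * w ^ n / ((s : ℂ) ^ 2 - conj z * w) ^ (n + 2) * h w
  have hG : DifferentiableOn ℂ G (closedBall 0 s) := by
    refine DifferentiableOn.mul ?_ hh
    exact (by fun_prop : DifferentiableOn ℂ (fun w : ℂ => (s : ℂ) ^ 2 * w ^ n) _).div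
      (by fun_prop) fun w hw => pow_ne_zero _ (hden w hw)
  have hreflect : Set.EqOn (fun w => (1 / (w - z) ^ (n + 2)) • conj (h w))
      (fun w => (conj (w - 0) / (w - 0)) * conj (G w)) (sphere 0 s) := by
    intro w hw
    have hw0 : w ≠ 0 := ne_of_mem_sphere hw hs.ne'
    have hwz : w - z ≠ 0 := sub_ne_zero.2 (sphere_disjoint_ball.ne_of_mem hw hz)
    have hw_conj0 : conj w ≠ 0 := (map_ne_zero _).2 hw0
    have hsq : (s : ℂ) ^ 2 = conj w * w := by
      rw [mul_comm, mul_conj, normSq_eq_norm_sq, mem_sphere_zero_iff_norm.1 hw]; push_cast; ring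
    simp only [G, sub_zero, smul_eq_mul, map_mul, map_div₀, map_pow, map_sub, conj_conj,
      conj_ofReal]
    rw [show (s : ℂ) ^ 2 - z * conj w = conj w * (w - z) by rw [hsq]; ring, mul_pow, hsq]
    field_simp
    ring
  rw [circleIntegral.integral_congr hs.le hreflect, ← neg_eq_zero, ← conj_circleIntegral,
    (hG.mono closure_ball_subset_closedBall).diffContOnCl.circleIntegral_eq_zero hs.le, map_zero]

theorem norm_circleIntegral_le_circleAverage_norm {E : Type*} [NormedAddCommGroup E]
    [NormedSpace ℂ E] (f : ℂ → E) (c : ℂ) (R : ℝ) :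
    ‖∮ w in C(c, R), f w‖ ≤ 2 * π * |R| * circleAverage (fun w => ‖f w‖) c R := by
  calc ‖∮ w in C(c, R), f w‖
      ≤ ∫ θ in 0..2 * π, ‖deriv (circleMap c R) θ • f (circleMap c R θ)‖ :=
        intervalIntegral.norm_integral_le_integral_norm two_pi_pos.le
    _ = 2 * π * |R| * circleAverage (fun w => ‖f w‖) c R := by
        simp only [norm_smul, deriv_circleMap, norm_mul, norm_circleMap_zero, norm_I, mul_one,
          intervalIntegral.integral_const_mul, circleAverage_def, smul_eq_mul]
        field_simp

theorem DifferentiableOn.circleAverage_re {h : ℂ → ℂ} {c : ℂ} {R : ℝ}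
    (hh : DifferentiableOn ℂ h (closedBall c |R|)) :
    circleAverage (fun w => (h w).re) c R = (h c).re := by
  rw [← (hh.mono closure_ball_subset_closedBall).diffContOnCl.circleAverage]
  exact reCLM.circleAverage_comp_comm
    ((hh.continuousOn.mono sphere_subset_closedBall).circleIntegrable')

theorem DifferentiableOn.circleIntegral_re_sub_smul_eq_iteratedDeriv {h : ℂ → ℂ} {s : ℝ} {z : ℂ}
    (hh : DifferentiableOn ℂ h (closedBall 0 s)) (hz : z ∈ ball 0 s) (A : ℝ) (n : ℕ) :
    ∮ w in C(0, s), (1 / (w - z) ^ (n + 2)) • ((2 * ((h w).re - A) : ℝ) : ℂ)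
      = (2 * π * I / (n + 1).factorial) • iteratedDeriv (n + 1) h z := by
  have h_sphere : ContinuousOn h (sphere 0 s) := hh.continuousOn.mono sphere_subset_closedBall
  have hsplit : Set.EqOn (fun w => (1 / (w - z) ^ (n + 2)) • ((2 * ((h w).re - A) : ℝ) : ℂ))
      (fun w => ((1 / (w - z) ^ (n + 2)) • h w + (1 / (w - z) ^ (n + 2)) • conj (h w))
        - (1 / (w - z) ^ (n + 2)) • (2 * A : ℂ)) (sphere 0 s) := by
    intro w _
    simp only [← smul_add, ← smul_sub, add_conj]
    push_cast
    ring_nf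
  have hK_h := h_sphere.circleIntegrable_one_div_sub_pow_smul hz (n + 2)
  have hK_conj : CircleIntegrable (fun w => (1 / (w - z) ^ (n + 2)) • conj (h w)) 0 s :=
    (continuous_conj.comp_continuousOn h_sphere).circleIntegrable_one_div_sub_pow_smul hz _
  have hK_const :=
    (continuousOn_const (c := (2 * A : ℂ))).circleIntegrable_one_div_sub_pow_smul hz (n + 2)
  have hK_sum : CircleIntegrable (fun w => (1 / (w - z) ^ (n + 2)) • h w
      + (1 / (w - z) ^ (n + 2)) • conj (h w)) 0 s := hK_h.add hK_conj
  rw [circleIntegral.integral_congr (pos_of_mem_ball hz).le hsplit,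
    circleIntegral.integral_sub hK_sum hK_const, circleIntegral.integral_add hK_h hK_conj,
    hh.circleIntegral_one_div_sub_pow_smul hz,
    hh.circleIntegral_one_div_sub_pow_smul_conj_eq_zero hz,
    circleIntegral_one_div_sub_pow_smul_eq_zero, add_zero, sub_zero]

theorem DifferentiableOn.norm_circleIntegral_re_sub_smul_le {h : ℂ → ℂ} {s A : ℝ} {z : ℂ}
    (hh : DifferentiableOn ℂ h (closedBall 0 s)) (hA : ∀ w ∈ sphere 0 s, (h w).re ≤ A)
    (hz : z ∈ ball 0 s) (k : ℕ) :
    ‖∮ w in C(0, s), (1 / (w - z) ^ k) • ((2 * ((h w).re - A) : ℝ) : ℂ)‖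
      ≤ 2 * π * s * (2 * (A - (h 0).re) / (s - ‖z‖) ^ k) := by
  have hs : 0 < s := pos_of_mem_ball hz
  have hzs : ‖z‖ < s := mem_ball_zero_iff.1 hz
  have h_sphere : ContinuousOn h (sphere 0 s) := hh.continuousOn.mono sphere_subset_closedBall
  set F : ℂ → ℂ := fun w => (1 / (w - z) ^ k) • ((2 * ((h w).re - A) : ℝ) : ℂ)
  set B := (s - ‖z‖) ^ k
  have hB : 0 < B := pow_pos (sub_pos.2 hzs) _
  have hF_le : ∀ w ∈ sphere (0 : ℂ) |s|, ‖F w‖ ≤ 2 * (A - (h w).re) / B := by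
    intro w hw
    rw [abs_of_pos hs] at hw
    have hdist : s - ‖z‖ ≤ ‖w - z‖ := by
      simpa [mem_sphere_zero_iff_norm.1 hw] using norm_sub_norm_le w z
    have hre := hA w hw
    simp only [F, norm_smul, norm_div, norm_one, norm_pow, Complex.norm_real, Real.norm_eq_abs,
      abs_of_nonpos (by linarith : 2 * ((h w).re - A) ≤ 0)]
    rw [one_div_mul_eq_div, show -(2 * ((h w).re - A)) = 2 * (A - (h w).re) by ring]
    exact div_le_div_of_nonneg_left (by linarith) hB
      (pow_le_pow_left₀ (sub_pos.2 hzs).le hdist _)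
  have hF_int : CircleIntegrable F 0 s :=
    (by fun_prop : ContinuousOn (fun w => ((2 * ((h w).re - A) : ℝ) : ℂ)) (sphere 0 s)
      ).circleIntegrable_one_div_sub_pow_smul hz _
  have hmaj_int : CircleIntegrable (fun w => 2 * (A - (h w).re) / B) 0 s :=
    (by fun_prop : ContinuousOn (fun w => 2 * (A - (h w).re) / B) (sphere 0 s)).circleIntegrable
      hs.le
  have hmean : circleAverage (fun w => 2 * (A - (h w).re) / B) 0 s = 2 * (A - (h 0).re) / B := by
    have hH : DifferentiableOn ℂ (fun w => 2 * (A - h w) / (B : ℂ)) (closedBall 0 |s|) := by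
      rw [abs_of_pos hs]; fun_prop
    convert hH.circleAverage_re using 2 with w <;> simp [div_ofReal_re]
  calc ‖∮ w in C(0, s), F w‖ ≤ 2 * π * |s| * circleAverage (fun w => ‖F w‖) 0 s :=
        norm_circleIntegral_le_circleAverage_norm F 0 s
    _ ≤ 2 * π * s * circleAverage (fun w => 2 * (A - (h w).re) / B) 0 s := by
        rw [abs_of_pos hs]
        exact mul_le_mul_of_nonneg_left
          (circleAverage_mono (f₁ := fun w => ‖F w‖) hF_int.norm hmaj_int hF_le) (by positivity)
    _ = 2 * π * s * (2 * (A - (h 0).re) / B) := by rw [hmean]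

theorem DifferentiableOn.norm_iteratedDeriv_le_of_re_le_on_sphere {h : ℂ → ℂ} {s A : ℝ} {z : ℂ}
    (hh : DifferentiableOn ℂ h (closedBall 0 s)) (hA : ∀ w ∈ sphere 0 s, (h w).re ≤ A)
    (hz : z ∈ ball 0 s) {n : ℕ} (hn : n ≠ 0) :
    ‖iteratedDeriv n h z‖ ≤ 2 * n.factorial * s * (A - (h 0).re) / (s - ‖z‖) ^ (n + 1) := by
  obtain ⟨m, rfl⟩ := Nat.exists_eq_succ_of_ne_zero hn
  have hbound := hh.norm_circleIntegral_re_sub_smul_le hA hz (m + 2)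
  have hnorm : ‖(2 * π * I / (m + 1).factorial : ℂ)‖ = 2 * π / (m + 1).factorial := by
    simp [abs_of_pos pi_pos]
  rw [hh.circleIntegral_re_sub_smul_eq_iteratedDeriv hz, norm_smul, hnorm] at hbound
  calc ‖iteratedDeriv (m + 1) h z‖
      = (m + 1).factorial / (2 * π)
          * (2 * π / (m + 1).factorial * ‖iteratedDeriv (m + 1) h z‖) := by
        field_simp
    _ ≤ (m + 1).factorial / (2 * π)
          * (2 * π * s * (2 * (A - (h 0).re) / (s - ‖z‖) ^ (m + 2))) := by
        gcongr
    _ = 2 * (m + 1).factorial * s * (A - (h 0).re) / (s - ‖z‖) ^ (m + 2) := by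
        field_simp

theorem DifferentiableOn.norm_iteratedDeriv_le_of_re_le {h : ℂ → ℂ} {R A : ℝ} {z : ℂ}
    (hh : DifferentiableOn ℂ h (ball 0 R)) (hA : ∀ w ∈ ball 0 R, (h w).re ≤ A)
    (hz : z ∈ ball 0 R) {n : ℕ} (hn : n ≠ 0) :
    ‖iteratedDeriv n h z‖ ≤ 2 * n.factorial * R * (A - (h 0).re) / (R - ‖z‖) ^ (n + 1) := by
  have hzR : ‖z‖ < R := mem_ball_zero_iff.1 hz
  have hcont : ContinuousAt
      (fun s => 2 * n.factorial * s * (A - (h 0).re) / (s - ‖z‖) ^ (n + 1)) R :=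
    by fun_prop (disch := exact pow_ne_zero _ (sub_pos.2 hzR).ne')
  refine ge_of_tendsto (hcont.tendsto.mono_left (nhdsWithin_le_nhds (s := Set.Iio R))) ?_
  filter_upwards [Ioo_mem_nhdsLT hzR] with s hs
  have hsR : closedBall (0 : ℂ) s ⊆ ball 0 R := closedBall_subset_ball hs.2
  exact (hh.mono hsR).norm_iteratedDeriv_le_of_re_le_on_sphere
    (fun w hw => hA w (hsR (sphere_subset_closedBall hw))) (mem_ball_zero_iff.2 hs.1) hn

theorem stmt4_general (R r : ℝ) (f : ℂ → ℂ) (G : Set ℂ)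
    (h3 : r < R)
    (hG : IsOpen G)
    (hhull : convexHull ℝ G ≠ Set.univ)
    (hf : DifferentiableOn ℂ f (ball 0 R))
    (hmaps : Set.MapsTo f (ball 0 R) G)
    (z : ℂ) (hz : ‖z‖ = r)
    (n : ℕ) (hn : 1 ≤ n) :
    ‖iteratedDeriv n f z‖ ≤
      2 * n.factorial * R / (R - r) ^ (n + 1) *
        infDist (f 0) (frontier (convexHull ℝ G)) := by
  have hz_ball : z ∈ ball 0 R := mem_ball_zero_iff.2 (hz ▸ h3)
  have hG_int : G ⊆ interior (convexHull ℝ G) := interior_maximal (subset_convexHull ℝ G) hG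
  obtain ⟨α, hα, hsep⟩ := (convex_convexHull ℝ G).exists_norm_eq_one_re_mul_sub_le_infDist_frontier
    ⟨f z, hG_int (hmaps hz_ball)⟩ hhull (f 0)
  set d := infDist (f 0) (frontier (convexHull ℝ G))
  have hre : ∀ w ∈ ball 0 R, (α * f w).re ≤ d + (α * f 0).re := fun w hw => by
    have := hsep _ (hG_int (hmaps hw))
    rw [mul_sub, sub_re] at this
    linarith
  have key := (hf.const_mul α).norm_iteratedDeriv_le_of_re_le hre hz_ball
    (Nat.one_le_iff_ne_zero.1 hn)
  rw [iteratedDeriv_const_mul_field, norm_mul, hα, one_mul, add_sub_cancel_right, hz] at key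
  rwa [div_mul_eq_mul_div]

theorem stmt4 (R r : ℝ) (f : ℂ → ℂ) (G : Set ℂ)
    (hR : 0 < R) (hr : 0 ≤ r) (h3 : r < R)
    (hG : IsOpen G) (hGconn : IsConnected G)
    (hhull : convexHull ℝ G ≠ Set.univ)
    (hf : DifferentiableOn ℂ f (ball 0 R))
    (hmaps : Set.MapsTo f (ball 0 R) G)
    (z : ℂ) (hz : ‖z‖ = r)
    (n : ℕ) (hn : 1 ≤ n) :
    ‖iteratedDeriv n f z‖ ≤
      2 * n.factorial * R / (R - r) ^ (n + 1) *
        infDist (f 0) (frontier (convexHull ℝ G)) :=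
  stmt4_general R r f G h3 hG hhull hf hmaps z hz n hn
end

section
/- Let f(z) = Σ_{n≥0} c_n z^n be holomorphic on D_R with Re f > 0 on D_R. Then for every q > 0, every integer m ≥ 1, and every z with |z| = r < R, (Σ_{n=m}^∞ |c_n z^n|^q)^{1/q} ≤ (2 r^m) / (R^{m-1} (R^q - r^q)^{1/q}) · Re f(0). -/
open Complex Metric

/-!
Carathéodory's coefficient bound `‖c n‖ * R ^ n ≤ 2 * (f 0).re` for `n ≥ 1` carries the whole
argument. On the circle `‖w‖ = ρ < R` one has `conj w = ρ ^ 2 / w`, so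
`(2 * (f w).re) * (ρ / w) ^ n` is `ρ ^ n * (f w / w ^ n)` plus a multiple of `conj (w ^ n * f w)`.
Averaging over the circle, the first term gives `ρ ^ n * c n` (Cauchy's formula) and the second
vanishes (mean value property, `w ^ n * f w` vanishes at `0`). Since `(f w).re ≥ 0`, the norm of
the average is at most the average of `2 * (f w).re`, which is `2 * (f 0).re`; let `ρ → R`.
The tail is then dominated by the geometric series `∑ (r / R) ^ (q * k)`.
-/

open Real ComplexConjugate Topology

theorem norm_circleAverage_le {E : Type*} [NormedAddCommGroup E] [NormedSpace ℝ E]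
    (f : ℂ → E) (c : ℂ) (R : ℝ) :
    ‖circleAverage f c R‖ ≤ circleAverage (fun z ↦ ‖f z‖) c R := by
  simp only [circleAverage_def, norm_smul, smul_eq_mul, norm_inv, Real.norm_eq_abs,
    abs_of_pos two_pi_pos]
  gcongr
  exact intervalIntegral.norm_integral_le_integral_norm two_pi_pos.le

theorem circleAverage_const_mul {𝕜 : Type*} [RCLike 𝕜] (a : 𝕜) (f : ℂ → 𝕜) (c : ℂ) (R : ℝ) :
    circleAverage (fun z ↦ a * f z) c R = a * circleAverage f c R := by
  simpa only [smul_eq_mul] using circleAverage_fun_smul (a := a) (f := f) (c := c) (R := R)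

theorem two_re_mul_div_pow_of_norm_eq {w : ℂ} {ρ : ℝ} (hρ : ρ ≠ 0) (hw : ‖w‖ = ρ) (z : ℂ)
    (n : ℕ) :
    (2 * z.re : ℂ) * (ρ / w) ^ n
      = (ρ : ℂ) ^ n * ((w ^ n)⁻¹ * z) + ((ρ : ℂ) ^ n)⁻¹ * conj (w ^ n * z) := by
  have hw0 : w ≠ 0 := by rintro rfl; simp [eq_comm, hρ] at hw
  have hρ0 : (ρ : ℂ) ≠ 0 := ofReal_ne_zero.2 hρ
  have hconj : conj w = (ρ : ℂ) ^ 2 / w := by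
    rw [eq_div_iff hw0, mul_comm, mul_conj, normSq_eq_norm_sq, hw]
    push_cast; ring
  have h2re : (2 * z.re : ℂ) = z + conj z := by rw [add_conj]; push_cast; ring
  rw [map_mul, map_pow, hconj, h2re]
  simp only [div_pow]
  field_simp
  ring

theorem tsum_rpow_rpow_inv_le_of_le_geometric {x : ℕ → ℝ} {b s q : ℝ} (hq : 0 < q)
    (hs0 : 0 ≤ s) (hs1 : s < 1) (hx0 : ∀ k, 0 ≤ x k) (hx : ∀ k, x k ≤ b * s ^ k) :
    (∑' k, x k ^ q) ^ (1 / q) ≤ b / (1 - s ^ q) ^ (1 / q) := by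
  have hb : 0 ≤ b := by simpa using (hx0 0).trans (hx 0)
  have hsq0 : 0 ≤ s ^ q := rpow_nonneg hs0 q
  have hsq1 : s ^ q < 1 := rpow_lt_one hs0 hs1 hq
  have hterm (k : ℕ) : x k ^ q ≤ b ^ q * (s ^ q) ^ k := calc
    x k ^ q ≤ (b * s ^ k) ^ q := rpow_le_rpow (hx0 k) (hx k) hq.le
    _ = b ^ q * (s ^ q) ^ k := by
      rw [mul_rpow hb (pow_nonneg hs0 k), ← rpow_natCast, ← rpow_natCast, ← rpow_mul hs0,
        ← rpow_mul hs0, mul_comm (k : ℝ)]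
  have hgeom : Summable fun k ↦ b ^ q * (s ^ q) ^ k :=
    (summable_geometric_of_lt_one hsq0 hsq1).mul_left _
  have hsum_le : ∑' k, x k ^ q ≤ b ^ q / (1 - s ^ q) := calc
    ∑' k, x k ^ q ≤ ∑' k, b ^ q * (s ^ q) ^ k :=
      (hgeom.of_nonneg_of_le (fun k ↦ rpow_nonneg (hx0 k) q) hterm).tsum_le_tsum hterm hgeom
    _ = b ^ q / (1 - s ^ q) := by
      rw [tsum_mul_left, tsum_geometric_of_lt_one hsq0 hsq1, div_eq_mul_inv]
  calc (∑' k, x k ^ q) ^ (1 / q) ≤ (b ^ q / (1 - s ^ q)) ^ (1 / q) :=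
        rpow_le_rpow (tsum_nonneg fun k ↦ rpow_nonneg (hx0 k) q) hsum_le (by positivity)
    _ = b / (1 - s ^ q) ^ (1 / q) := by
      rw [div_rpow (rpow_nonneg hb q) (sub_nonneg.2 hsq1.le), ← rpow_mul hb,
        mul_one_div_cancel hq.ne', rpow_one]

section PowerSeries

variable {f : ℂ → ℂ} {c : ℕ → ℂ} {R : ℝ}

theorem hasFPowerSeriesOnBall_ofScalars (hR : 0 < R)
    (hsum : ∀ w ∈ ball (0 : ℂ) R, HasSum (fun n ↦ c n * w ^ n) (f w)) :
    HasFPowerSeriesOnBall f (FormalMultilinearSeries.ofScalars ℂ c) 0 (ENNReal.ofReal R) where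
  r_le := by
    refine ENNReal.le_of_forall_nnreal_lt fun ρ hρ ↦ ?_
    have hρR : (ρ : ℝ) < R := by simpa using (ENNReal.lt_ofReal_iff_toReal_lt (by simp)).1 hρ
    have hmem : ((ρ : ℝ) : ℂ) ∈ ball (0 : ℂ) R := by simpa using hρR
    refine FormalMultilinearSeries.le_radius_of_tendsto _ (l := 0) ?_
    simpa [norm_mul] using (hsum _ hmem).summable.tendsto_atTop_zero.norm
  r_pos := by simpa using hR
  hasSum {y} hy := by
    simpa [FormalMultilinearSeries.ofScalars_apply_eq, mul_comm] using hsum y (by simpa using hy)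

theorem circleAverage_inv_pow_mul_eq_coeff (hf : DifferentiableOn ℂ f (ball 0 R))
    (hsum : ∀ w ∈ ball (0 : ℂ) R, HasSum (fun n ↦ c n * w ^ n) (f w))
    {ρ : ℝ} (hρ : 0 < ρ) (hρR : ρ < R) (n : ℕ) :
    circleAverage (fun w ↦ (w ^ n)⁻¹ * f w) 0 ρ = c n := by
  lift ρ to NNReal using hρ.le
  have hcauchy := (hf.mono (closedBall_subset_ball hρR)).hasFPowerSeriesOnBall
    (by exact_mod_cast hρ)
  have hseries := (hasFPowerSeriesOnBall_ofScalars (hρ.trans hρR) hsum).hasFPowerSeriesAt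
    |>.eq_formalMultilinearSeries hcauchy.hasFPowerSeriesAt
  have hcoeff := congrArg (fun p ↦ p n (fun _ ↦ (1 : ℂ))) hseries
  simp only [FormalMultilinearSeries.ofScalars_apply_eq, cauchyPowerSeries_apply] at hcoeff
  rw [circleAverage_eq_circleIntegral hρ.ne']
  simpa [inv_pow, mul_assoc, mul_comm, mul_left_comm] using hcoeff.symm

theorem circleAverage_re_eq (hf : DifferentiableOn ℂ f (ball 0 R)) {ρ : ℝ} (hρ : 0 ≤ ρ)
    (hρR : ρ < R) : circleAverage (fun w ↦ (f w).re) 0 ρ = (f 0).re := by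
  have hcl : DiffContOnCl ℂ f (ball 0 |ρ|) :=
    hf.diffContOnCl_ball (by simpa [abs_of_nonneg hρ] using closedBall_subset_ball hρR)
  rw [← hcl.circleAverage]
  exact reCLM.circleAverage_comp_comm
    (hcl.continuousOn_ball.mono sphere_subset_closedBall).circleIntegrable'

theorem circleAverage_pow_mul_eq_zero (hf : DifferentiableOn ℂ f (ball 0 R)) {ρ : ℝ}
    (hρ : 0 ≤ ρ) (hρR : ρ < R) {n : ℕ} (hn : n ≠ 0) :
    circleAverage (fun w ↦ w ^ n * f w) 0 ρ = 0 := by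
  have hcl : DiffContOnCl ℂ (fun w ↦ w ^ n * f w) (ball 0 |ρ|) :=
    ((differentiableOn_pow n).mul hf).diffContOnCl_ball
      (by simpa [abs_of_nonneg hρ] using closedBall_subset_ball hρR)
  simp [hcl.circleAverage, hn]

theorem norm_coeff_mul_pow_le_of_lt (hf : DifferentiableOn ℂ f (ball 0 R))
    (hsum : ∀ w ∈ ball (0 : ℂ) R, HasSum (fun n ↦ c n * w ^ n) (f w))
    (hre : ∀ w ∈ ball (0 : ℂ) R, 0 ≤ (f w).re) {n : ℕ} (hn : n ≠ 0) {ρ : ℝ} (hρ : 0 < ρ)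
    (hρR : ρ < R) :
    ‖c n‖ * ρ ^ n ≤ 2 * (f 0).re := by
  have hsphere : sphere (0 : ℂ) |ρ| ⊆ ball 0 R := by
    rw [abs_of_pos hρ]; exact sphere_subset_ball hρR
  have hf_cont : ContinuousOn f (sphere 0 |ρ|) := hf.continuousOn.mono hsphere
  have hpow_cont : ContinuousOn (fun w ↦ w ^ n * f w) (sphere 0 |ρ|) :=
    (continuous_pow n).continuousOn.mul hf_cont
  have hinv_cont : ContinuousOn (fun w : ℂ ↦ (w ^ n)⁻¹) (sphere 0 |ρ|) :=
    (continuous_pow n).continuousOn.inv₀ fun w hw ↦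
      pow_ne_zero _ (ne_of_mem_sphere hw (abs_pos.2 hρ.ne').ne')
  have hconj : circleAverage (fun w ↦ conj (w ^ n * f w)) 0 ρ = 0 := by
    rw [show (fun w ↦ conj (w ^ n * f w)) = conjCLE.toContinuousLinearMap ∘ fun w ↦ w ^ n * f w
      from rfl, conjCLE.toContinuousLinearMap.circleAverage_comp_comm hpow_cont.circleIntegrable']
    simp [circleAverage_pow_mul_eq_zero hf hρ.le hρR hn]
  have hcoeff : circleAverage (fun w ↦ (2 * (f w).re : ℂ) * (ρ / w) ^ n) 0 ρ = ρ ^ n * c n := by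
    rw [circleAverage_congr_sphere fun w hw ↦ two_re_mul_div_pow_of_norm_eq hρ.ne'
        (by simpa [abs_of_pos hρ] using hw) (f w) n,
      circleAverage_fun_add, circleAverage_const_mul, circleAverage_const_mul,
      circleAverage_inv_pow_mul_eq_coeff hf hsum hρ hρR, hconj]
    · simp
    · exact (continuousOn_const.mul (hinv_cont.mul hf_cont)).circleIntegrable'
    · exact (continuousOn_const.mul
        (continuous_conj.comp_continuousOn hpow_cont)).circleIntegrable'
  calc ‖c n‖ * ρ ^ n
      = ‖circleAverage (fun w ↦ (2 * (f w).re : ℂ) * (ρ / w) ^ n) 0 ρ‖ := by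
        rw [hcoeff, norm_mul, norm_pow, norm_real, norm_of_nonneg hρ.le, mul_comm]
    _ ≤ circleAverage (fun w ↦ ‖(2 * (f w).re : ℂ) * (ρ / w) ^ n‖) 0 ρ :=
        norm_circleAverage_le _ _ _
    _ = circleAverage (fun w ↦ 2 * (f w).re) 0 ρ := by
        refine circleAverage_congr_sphere fun w hw ↦ ?_
        have hw' : ‖w‖ = ρ := by simpa [abs_of_pos hρ] using hw
        simp [hw', hρ.ne', abs_of_pos hρ, abs_of_nonneg (hre w (hsphere hw))]
    _ = 2 * (f 0).re := by rw [circleAverage_const_mul, circleAverage_re_eq hf hρ.le hρR]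

theorem norm_coeff_mul_pow_le (hR : 0 < R) (hf : DifferentiableOn ℂ f (ball 0 R))
    (hsum : ∀ w ∈ ball (0 : ℂ) R, HasSum (fun n ↦ c n * w ^ n) (f w))
    (hre : ∀ w ∈ ball (0 : ℂ) R, 0 ≤ (f w).re) {n : ℕ} (hn : n ≠ 0) :
    ‖c n‖ * R ^ n ≤ 2 * (f 0).re := by
  have hlim : Filter.Tendsto (fun ρ ↦ ‖c n‖ * ρ ^ n) (𝓝[<] R) (𝓝 (‖c n‖ * R ^ n)) :=
    ((continuous_const.mul (continuous_pow n)).tendsto R).mono_left nhdsWithin_le_nhds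
  refine le_of_tendsto hlim ?_
  filter_upwards [Ioo_mem_nhdsLT hR] with ρ hρ
  exact norm_coeff_mul_pow_le_of_lt hf hsum hre hn hρ.1 hρ.2

end PowerSeries

theorem stmt5_general (R r q : ℝ) (m : ℕ) (f : ℂ → ℂ) (c : ℕ → ℂ)
    (hq : 0 < q) (hm : 1 ≤ m) (hr : 0 ≤ r) (h3 : r < R)
    (hf : DifferentiableOn ℂ f (ball 0 R))
    (hsum : ∀ w ∈ ball (0:ℂ) R, HasSum (fun n : ℕ => c n * w ^ n) (f w))
    (hpos : ∀ w ∈ ball (0:ℂ) R, 0 < (f w).re)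
    (z : ℂ) (hz : ‖z‖ = r) :
    (∑' k : ℕ, ‖c (m + k) * z ^ (m + k)‖ ^ q) ^ (1 / q) ≤
      2 * r ^ m / (R ^ (m - 1) * (R ^ q - r ^ q) ^ (1 / q)) * (f 0).re := by
  have hR : 0 < R := hr.trans_lt h3
  have hterm (k : ℕ) :
      ‖c (m + k) * z ^ (m + k)‖ ≤ 2 * (f 0).re * (r / R) ^ m * (r / R) ^ k := by
    have hcoeff := norm_coeff_mul_pow_le hR hf hsum (fun w hw ↦ (hpos w hw).le)
      (n := m + k) (by omega)
    rw [norm_mul, norm_pow, hz, mul_assoc, ← pow_add, div_pow, ← mul_div_assoc,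
      le_div_iff₀ (pow_pos hR _)]
    linarith [mul_le_mul_of_nonneg_right hcoeff (pow_nonneg hr (m + k))]
  have hroot : (1 - (r / R) ^ q) ^ (1 / q) = (R ^ q - r ^ q) ^ (1 / q) / R := by
    have hRq : 0 < R ^ q := rpow_pos_of_pos hR q
    rw [div_rpow hr hR.le, one_sub_div hRq.ne',
      div_rpow (sub_nonneg.2 (rpow_le_rpow hr h3.le hq.le)) hRq.le, ← rpow_mul hR.le,
      mul_one_div_cancel hq.ne', rpow_one]
  calc (∑' k : ℕ, ‖c (m + k) * z ^ (m + k)‖ ^ q) ^ (1 / q)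
      ≤ 2 * (f 0).re * (r / R) ^ m / (1 - (r / R) ^ q) ^ (1 / q) :=
        tsum_rpow_rpow_inv_le_of_le_geometric hq (div_nonneg hr hR.le) ((div_lt_one hR).2 h3)
          (fun _ ↦ norm_nonneg _) hterm
    _ = 2 * r ^ m / (R ^ (m - 1) * (R ^ q - r ^ q) ^ (1 / q)) * (f 0).re := by
      obtain ⟨j, rfl⟩ : ∃ j, m = j + 1 := ⟨m - 1, by omega⟩
      rw [hroot, Nat.add_sub_cancel, div_pow]
      field_simp
      ring

theorem stmt5 (R r q : ℝ) (m : ℕ) (f : ℂ → ℂ) (c : ℕ → ℂ)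
    (hR : 0 < R) (hq : 0 < q) (hm : 1 ≤ m) (hr : 0 ≤ r) (h3 : r < R)
    (hf : DifferentiableOn ℂ f (ball 0 R))
    (hsum : ∀ w ∈ ball (0:ℂ) R, HasSum (fun n : ℕ => c n * w ^ n) (f w))
    (hpos : ∀ w ∈ ball (0:ℂ) R, 0 < (f w).re)
    (z : ℂ) (hz : ‖z‖ = r) :
    (∑' k : ℕ, ‖c (m + k) * z ^ (m + k)‖ ^ q) ^ (1 / q) ≤
      2 * r ^ m / (R ^ (m - 1) * (R ^ q - r ^ q) ^ (1 / q)) * (f 0).re :=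
  stmt5_general R r q m f c hq hm hr h3 hf hsum hpos z hz
end

section
/- Let f(z) = Σ_{n≥0} c_n z^n be holomorphic on D_R with f(D_R) ⊆ G, where G ⊆ ℂ is a domain with convex hull G̃ ≠ ℂ. Then for every q > 0, every integer m ≥ 1, and every z with |z| = r < R, (Σ_{n=m}^∞ |c_n z^n|^q)^{1/q} ≤ (2 r^m) / (R^{m-1} (R^q - r^q)^{1/q}) · dist(c_0, ∂G̃). -/
open Complex Metric Real MeasureTheory Set
open scoped ComplexConjugate Topology

/-!
`G` lies in the interior of its convex hull `K`. A supporting line of `K` at a point `p ∈ ∂K`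
nearest to `c₀ = f 0` bounds a half-plane `{z | 0 ≤ Re (a (p - z))}`, `‖a‖ = 1`, containing `G`,
with `Re (a (p - c₀)) ≤ ‖p - c₀‖ = dist(c₀, ∂K)`. So `h = a (p - f)` has nonnegative real part,
and Carathéodory's inequality `‖c n‖ R ^ n ≤ 2 Re h(0) ≤ 2 dist(c₀, ∂K)` follows for `n ≥ 1`: on a
circle `|w| = ρ < R` the moment of `h` against `e^{inθ}` vanishes, so the `n`-th coefficient of
`h` is its moment against `e^{-inθ}` with `h` replaced by `2 Re h ≥ 0`, which is at most the mean
of `2 Re h`. The `ℓ^q` bound is then a geometric series in `(r / R) ^ q`.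
-/

theorem setIntegral_exp_int_mul_I (n : ℤ) :
    ∫ θ in Ioc 0 (2 * π), exp (n * θ * I) = if n = 0 then 2 * π else 0 := by
  rw [← intervalIntegral.integral_of_le (by positivity)]
  split_ifs with hn
  · simp [hn]
  · have hnI : (n : ℂ) * I ≠ 0 := by simp [hn, I_ne_zero]
    simp_rw [mul_comm _ I, ← mul_assoc, mul_comm I]
    rw [integral_exp_mul_complex hnI, ofReal_mul, ofReal_ofNat,
      show (n : ℂ) * I * (2 * π) = n * (2 * π * I) by ring, exp_int_mul_two_pi_mul_I]
    simp

theorem summable_norm_mul_pow_of_hasSum {R ρ : ℝ} (hρ : 0 ≤ ρ) (hρR : ρ < R) {b : ℕ → ℂ}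
    {h : ℂ → ℂ} (hsum : ∀ w ∈ ball (0 : ℂ) R, HasSum (fun k => b k * w ^ k) (h w)) :
    Summable fun k => ‖b k‖ * ρ ^ k := by
  obtain ⟨ρ', hρρ', hρ'R⟩ := exists_between hρR
  have hρ' : 0 < ρ' := hρ.trans_lt hρρ'
  have hmem : (ρ' : ℂ) ∈ ball (0 : ℂ) R := by simpa [abs_of_pos hρ'] using hρ'R
  have hbdd : (fun k => ‖b k‖ * ρ' ^ k) =O[Filter.atTop] fun _ => (1 : ℝ) := by
    simpa [abs_of_pos hρ'] using (hsum _ hmem).summable.tendsto_atTop_zero.norm.isBigO_one ℝ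
  refine summable_of_isBigO_nat
    (summable_geometric_of_lt_one (div_nonneg hρ hρ'.le) ((div_lt_one hρ').2 hρρ')) ?_
  refine ((hbdd.mul (Asymptotics.isBigO_refl (fun k => (ρ / ρ') ^ k) _)).congr
    (fun k => ?_) (fun k => one_mul _))
  rw [div_pow, mul_assoc, mul_div_cancel₀ _ (pow_pos hρ' k).ne']

section CircleIntegral

variable {R ρ : ℝ} {b : ℕ → ℂ} {h : ℂ → ℂ}

theorem hasSum_setIntegral_circleMap_mul_exp (hρ : 0 ≤ ρ) (hρR : ρ < R)
    (hsum : ∀ w ∈ ball (0 : ℂ) R, HasSum (fun k => b k * w ^ k) (h w)) (s : ℤ) :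
    HasSum (fun k : ℕ => if (k : ℤ) + s = 0 then 2 * π * b k * ρ ^ k else 0)
      (∫ θ in Ioc 0 (2 * π), h (circleMap 0 ρ θ) * exp (s * θ * I)) := by
  set F : ℕ → ℝ → ℂ := fun k θ => b k * ρ ^ k * exp (((k + s : ℤ) : ℂ) * θ * I)
  have hF_int : ∀ k, Integrable (F k) (volume.restrict (Ioc 0 (2 * π))) := fun k =>
    Continuous.integrableOn_Ioc (by fun_prop)
  have hF_norm : ∀ k θ, ‖F k θ‖ = ‖b k‖ * ρ ^ k := fun k θ => by
    have : ((k + s : ℤ) : ℂ) * θ * I = (((k + s : ℤ) * θ : ℝ) : ℂ) * I := by push_cast; ring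
    simp only [F, this, norm_mul, norm_exp_ofReal_mul_I, norm_pow, norm_real,
      Real.norm_of_nonneg hρ, mul_one]
  have hF_tsum : ∀ θ, ∑' k, F k θ = h (circleMap 0 ρ θ) * exp (s * θ * I) := fun θ => by
    refine (((hsum _ ?_).mul_right (exp (s * θ * I))).congr_fun fun k => ?_).tsum_eq
    · simpa [abs_of_nonneg hρ] using hρR
    · rw [circleMap_zero_pow, circleMap_zero, ofReal_pow, mul_assoc, mul_assoc, ← Complex.exp_add]
      simp only [F]
      push_cast
      ring_nf
  have hF_integral : ∀ k, ∫ θ in Ioc 0 (2 * π), F k θ =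
      if (k : ℤ) + s = 0 then 2 * π * b k * ρ ^ k else 0 := fun k => by
    rw [integral_const_mul, setIntegral_exp_int_mul_I]
    split_ifs <;> push_cast <;> ring
  have hsummable : Summable fun k => ∫ θ in Ioc 0 (2 * π), ‖F k θ‖ := by
    simpa [hF_norm, Real.volume_real_Ioc_of_le two_pi_pos.le] using
      (summable_norm_mul_pow_of_hasSum hρ hρR hsum).mul_left (2 * π)
  simpa only [hF_integral, hF_tsum] using hasSum_integral_of_summable_integral_norm hF_int hsummable

theorem setIntegral_circleMap_mul_exp_neg (hρ : 0 ≤ ρ) (hρR : ρ < R)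
    (hsum : ∀ w ∈ ball (0 : ℂ) R, HasSum (fun k => b k * w ^ k) (h w)) (n : ℕ) :
    ∫ θ in Ioc 0 (2 * π), h (circleMap 0 ρ θ) * exp (-n * θ * I) = 2 * π * b n * ρ ^ n := by
  have key := hasSum_setIntegral_circleMap_mul_exp hρ hρR hsum (-n)
  push_cast at key
  refine key.unique ?_
  convert hasSum_ite_eq n (2 * π * b n * ρ ^ n) using 2 with k
  simp only [add_neg_eq_zero, Nat.cast_inj]
  split_ifs with hk <;> simp [hk]

theorem setIntegral_circleMap_mul_exp_eq_zero (hρ : 0 ≤ ρ) (hρR : ρ < R)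
    (hsum : ∀ w ∈ ball (0 : ℂ) R, HasSum (fun k => b k * w ^ k) (h w)) {n : ℕ} (hn : n ≠ 0) :
    ∫ θ in Ioc 0 (2 * π), h (circleMap 0 ρ θ) * exp (n * θ * I) = 0 := by
  have key := hasSum_setIntegral_circleMap_mul_exp hρ hρR hsum n
  push_cast at key
  refine key.unique ?_
  convert hasSum_zero with k
  rw [if_neg (by omega)]

end CircleIntegral

theorem norm_integral_mul_le_two_re_integral {α : Type*} [MeasurableSpace α] {μ : Measure α}
    {g u : α → ℂ} (hg : Integrable g μ) (hg_re : ∀ x, 0 ≤ (g x).re)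
    (hu : AEStronglyMeasurable u μ) (hu_norm : ∀ x, ‖u x‖ = 1)
    (horth : ∫ x, g x * conj (u x) ∂μ = 0) :
    ‖∫ x, g x * u x ∂μ‖ ≤ 2 * (∫ x, g x ∂μ).re := by
  have hu_bdd : ∀ᵐ x ∂μ, ‖u x‖ ≤ 1 := ae_of_all _ fun x => (hu_norm x).le
  have hg_conj : Integrable (fun x => conj (g x)) μ :=
    (conjCLE : ℂ ≃L[ℝ] ℂ).toContinuousLinearMap.integrable_comp hg
  -- By orthogonality, `∫ g u = ∫ (g + conj g) u = ∫ 2 Re g · u`.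
  have hconj : ∫ x, conj (g x) * u x ∂μ = 0 := by
    simp_rw [show ∀ x, conj (g x) * u x = conj (g x * conj (u x)) by simp, integral_conj, horth,
      map_zero]
  calc ‖∫ x, g x * u x ∂μ‖ = ‖∫ x, ((2 * (g x).re : ℝ) : ℂ) * u x ∂μ‖ := by
        rw [← add_zero (∫ x, g x * u x ∂μ), ← hconj,
          ← integral_add (hg.mul_bdd hu hu_bdd) (hg_conj.mul_bdd hu hu_bdd)]
        simp_rw [← add_mul, add_conj]
    _ ≤ ∫ x, ‖((2 * (g x).re : ℝ) : ℂ) * u x‖ ∂μ := norm_integral_le_integral_norm _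
    _ = ∫ x, 2 * (g x).re ∂μ := by
        congr 1 with x
        rw [norm_mul, hu_norm, mul_one, norm_real, Real.norm_of_nonneg (by linarith [hg_re x])]
    _ = 2 * (∫ x, g x ∂μ).re := by
        rw [integral_const_mul]
        exact congrArg _ (integral_re hg)

section Caratheodory

variable {R : ℝ} {b : ℕ → ℂ} {h : ℂ → ℂ}

theorem norm_coeff_mul_pow_le_of_re_nonneg_of_lt {ρ : ℝ} (hρ : 0 ≤ ρ) (hρR : ρ < R)
    (hcont : ContinuousOn h (ball 0 R))
    (hsum : ∀ w ∈ ball (0 : ℂ) R, HasSum (fun k => b k * w ^ k) (h w))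
    (hre : ∀ w ∈ ball (0 : ℂ) R, 0 ≤ (h w).re) {n : ℕ} (hn : n ≠ 0) :
    ‖b n‖ * ρ ^ n ≤ 2 * (b 0).re := by
  have hmem : ∀ θ, circleMap 0 ρ θ ∈ ball (0 : ℂ) R := fun θ => by
    simpa [abs_of_nonneg hρ] using hρR
  have hg : Continuous fun θ => h (circleMap 0 ρ θ) :=
    hcont.comp_continuous (continuous_circleMap 0 ρ) hmem
  have hconj_exp : ∀ θ : ℝ, conj (exp (-n * θ * I)) = exp (n * θ * I) := fun θ => by
    rw [← exp_conj]
    simp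
  have key := norm_integral_mul_le_two_re_integral (μ := volume.restrict (Ioc 0 (2 * π)))
    (u := fun θ : ℝ => exp (-n * θ * I)) hg.integrableOn_Ioc (fun θ => hre _ (hmem θ))
    (Continuous.aestronglyMeasurable (by fun_prop)) (fun θ => by
      rw [show (-n : ℂ) * θ * I = ((-n * θ : ℝ) : ℂ) * I by push_cast; ring]
      exact norm_exp_ofReal_mul_I _)
    (by simpa only [hconj_exp] using setIntegral_circleMap_mul_exp_eq_zero hρ hρR hsum hn)
  have h0 := setIntegral_circleMap_mul_exp_neg hρ hρR hsum 0
  simp only [CharP.cast_eq_zero, neg_zero, zero_mul, Complex.exp_zero, mul_one, pow_zero] at h0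
  rw [setIntegral_circleMap_mul_exp_neg hρ hρR hsum n, h0] at key
  have hπ : (0 : ℝ) < 2 * π := two_pi_pos
  have hnorm : ‖2 * (π : ℂ) * b n * ρ ^ n‖ = 2 * π * (‖b n‖ * ρ ^ n) := by
    rw [show (2 * π : ℂ) = ((2 * π : ℝ) : ℂ) by push_cast; ring]
    simp only [norm_mul, norm_pow, norm_real, Real.norm_of_nonneg hρ, Real.norm_of_nonneg hπ.le]
    ring
  have hre0 : (2 * (π : ℂ) * b 0).re = 2 * π * (b 0).re := by
    rw [show (2 * π : ℂ) = ((2 * π : ℝ) : ℂ) by push_cast; ring, re_ofReal_mul]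
  rw [hnorm, hre0] at key
  exact le_of_mul_le_mul_left (by linarith) hπ

theorem norm_coeff_mul_pow_le_of_re_nonneg (hR : 0 < R) (hcont : ContinuousOn h (ball 0 R))
    (hsum : ∀ w ∈ ball (0 : ℂ) R, HasSum (fun k => b k * w ^ k) (h w))
    (hre : ∀ w ∈ ball (0 : ℂ) R, 0 ≤ (h w).re) {n : ℕ} (hn : n ≠ 0) :
    ‖b n‖ * R ^ n ≤ 2 * (b 0).re := by
  have hlim : Filter.Tendsto (fun ρ => ‖b n‖ * ρ ^ n) (𝓝[<] R) (𝓝 (‖b n‖ * R ^ n)) :=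
    ((continuous_const.mul (continuous_pow n)).tendsto R).mono_left nhdsWithin_le_nhds
  refine le_of_tendsto hlim (Filter.mem_of_superset (Ioo_mem_nhdsLT hR) fun ρ hρ => ?_)
  exact norm_coeff_mul_pow_le_of_re_nonneg_of_lt hρ.1.le hρ.2 hcont hsum hre hn

theorem norm_coeff_mul_pow_le_of_mapsTo_halfPlane {c : ℕ → ℂ} {f : ℂ → ℂ} (hR : 0 < R)
    (hcont : ContinuousOn f (ball 0 R))
    (hsum : ∀ w ∈ ball (0 : ℂ) R, HasSum (fun k => c k * w ^ k) (f w)) {a p : ℂ} (ha : ‖a‖ = 1)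
    (hhalf : ∀ w ∈ ball (0 : ℂ) R, 0 ≤ (a * (p - f w)).re) {n : ℕ} (hn : n ≠ 0) :
    ‖c n‖ * R ^ n ≤ 2 * (a * (p - c 0)).re := by
  have hsum' : ∀ w ∈ ball (0 : ℂ) R,
      HasSum (fun k => a * ((if k = 0 then p else 0) - c k) * w ^ k) (a * (p - f w)) :=
    fun w hw => (((hasSum_ite_eq 0 p).sub (hsum w hw)).mul_left a).congr_fun fun k => by
      rcases k with _ | k <;> simp
      ring
  simpa [hn, ha] using norm_coeff_mul_pow_le_of_re_nonneg hR (by fun_prop) hsum' hhalf hn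

end Caratheodory

theorem Convex.exists_dual_supporting_at_nearest_frontier {E : Type*} [NormedAddCommGroup E]
    [NormedSpace ℝ E] [ProperSpace E] {K : Set E} (hK : Convex ℝ K) (hK_univ : K ≠ univ)
    {x : E} (hx : x ∈ interior K) :
    ∃ (ℓ : StrongDual ℝ E) (p : E), ‖ℓ‖ = 1 ∧ (∀ z ∈ interior K, ℓ z ≤ ℓ p) ∧
      ℓ p - ℓ x ≤ infDist x (frontier K) := by
  have hfr : (frontier K).Nonempty :=
    nonempty_frontier_iff.2 ⟨⟨x, interior_subset hx⟩, hK_univ⟩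
  obtain ⟨p, hp, hdist⟩ := isClosed_frontier.exists_infDist_eq_dist hfr x
  obtain ⟨ℓ, hℓ⟩ := geometric_hahn_banach_open_point hK.interior isOpen_interior
    (fun hp' => hp.2 hp')
  have hℓ0 : ℓ ≠ 0 := by
    rintro rfl
    exact lt_irrefl _ (hℓ x hx)
  set ℓ' : StrongDual ℝ E := (‖ℓ‖⁻¹ : ℝ) • ℓ
  have hℓ' : ‖ℓ'‖ = 1 := norm_smul_inv_norm hℓ0
  refine ⟨ℓ', p, hℓ', fun z hz => ?_, ?_⟩
  · simpa [ℓ'] using mul_le_mul_of_nonneg_left (hℓ z hz).le (inv_nonneg.2 (norm_nonneg ℓ))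
  · calc ℓ' p - ℓ' x = ℓ' (p - x) := (map_sub ℓ' p x).symm
      _ ≤ ‖ℓ'‖ * ‖p - x‖ := (le_norm_self _).trans (ℓ'.le_opNorm _)
      _ = infDist x (frontier K) := by rw [hℓ', one_mul, hdist, dist_comm, dist_eq_norm]

theorem Complex.exists_halfPlane_supporting_at_nearest_frontier {K : Set ℂ} (hK : Convex ℝ K)
    (hK_univ : K ≠ univ) {x : ℂ} (hx : x ∈ interior K) :
    ∃ a p : ℂ, ‖a‖ = 1 ∧ (∀ z ∈ interior K, 0 ≤ (a * (p - z)).re) ∧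
      (a * (p - x)).re ≤ infDist x (frontier K) := by
  obtain ⟨ℓ, p, hℓ, hsupp, hdist⟩ := hK.exists_dual_supporting_at_nearest_frontier hK_univ hx
  set v := (InnerProductSpace.toDual ℝ ℂ).symm ℓ
  have hℓv : ∀ z, ℓ z = (conj v * z).re := fun z => by
    rw [← InnerProductSpace.toDual_symm_apply (𝕜 := ℝ), Complex.inner, mul_comm]
  refine ⟨conj v, p, ?_, fun z hz => ?_, ?_⟩
  · rw [RCLike.norm_conj, LinearIsometryEquiv.norm_map, hℓ]
  · simpa [mul_sub, hℓv] using hsupp z hz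
  · simpa [mul_sub, hℓv] using hdist

theorem rpow_tsum_rpow_le_of_le_geometric {x : ℕ → ℝ} {M u q : ℝ} (hq : 0 < q) (hu0 : 0 ≤ u)
    (hu1 : u < 1) (hx0 : ∀ k, 0 ≤ x k) (hx : ∀ k, x k ≤ M * u ^ k) :
    (∑' k, x k ^ q) ^ (1 / q) ≤ M / (1 - u ^ q) ^ (1 / q) := by
  have hM : 0 ≤ M := by simpa using (hx0 0).trans (hx 0)
  have huq0 : 0 ≤ u ^ q := rpow_nonneg hu0 q
  have huq1 : u ^ q < 1 := rpow_lt_one hu0 hu1 hq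
  have hterm : ∀ k, x k ^ q ≤ M ^ q * (u ^ q) ^ k := fun k => by
    calc x k ^ q ≤ (M * u ^ k) ^ q := rpow_le_rpow (hx0 k) (hx k) hq.le
      _ = M ^ q * (u ^ q) ^ k := by rw [mul_rpow hM (by positivity), ← rpow_pow_comm hu0]
  have hgeom := (summable_geometric_of_lt_one huq0 huq1).mul_left (M ^ q)
  have hsum : ∑' k, x k ^ q ≤ M ^ q / (1 - u ^ q) := by
    calc ∑' k, x k ^ q ≤ ∑' k, M ^ q * (u ^ q) ^ k :=
          Summable.tsum_le_tsum hterm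
            (hgeom.of_nonneg_of_le (fun k => rpow_nonneg (hx0 k) q) hterm) hgeom
      _ = M ^ q / (1 - u ^ q) := by
          rw [tsum_mul_left, tsum_geometric_of_lt_one huq0 huq1, div_eq_mul_inv]
  calc (∑' k, x k ^ q) ^ (1 / q) ≤ (M ^ q / (1 - u ^ q)) ^ (1 / q) :=
        rpow_le_rpow (tsum_nonneg fun k => rpow_nonneg (hx0 k) q) hsum (by positivity)
    _ = M / (1 - u ^ q) ^ (1 / q) := by
        rw [div_rpow (rpow_nonneg hM q) (by linarith), one_div, rpow_rpow_inv hM hq.ne']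

theorem mul_div_pow_div_one_sub_rpow_eq {R r q d : ℝ} {m : ℕ} (hR : 0 < R) (hr : 0 ≤ r)
    (hrR : r < R) (hq : 0 < q) (hm : 1 ≤ m) :
    d * (r / R) ^ m / (1 - (r / R) ^ q) ^ (1 / q) =
      r ^ m / (R ^ (m - 1) * (R ^ q - r ^ q) ^ (1 / q)) * d := by
  have hRq : 0 < R ^ q := rpow_pos_of_pos hR q
  have h1 : 1 - (r / R) ^ q = (R ^ q - r ^ q) / R ^ q := by
    rw [div_rpow hr hR.le]
    field_simp
  have h2 : (R ^ q) ^ (1 / q) = R := by rw [one_div, rpow_rpow_inv hR.le hq.ne']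
  have hRm : R ^ m = R ^ (m - 1) * R := by rw [← pow_succ, Nat.sub_add_cancel hm]
  rw [h1, div_rpow (sub_pos.2 (rpow_lt_rpow hr hrR hq)).le hRq.le, h2, div_pow, hRm]
  field_simp

theorem stmt7_general (R r q : ℝ) (m : ℕ) (f : ℂ → ℂ) (c : ℕ → ℂ) (G : Set ℂ)
    (hR : 0 < R) (hq : 0 < q) (hm : 1 ≤ m) (hr : 0 ≤ r) (h3 : r < R)
    (hG : IsOpen G)
    (hhull : convexHull ℝ G ≠ Set.univ)
    (hf : DifferentiableOn ℂ f (ball 0 R))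
    (hmaps : Set.MapsTo f (ball 0 R) G)
    (hsum : ∀ w ∈ ball (0:ℂ) R, HasSum (fun n : ℕ => c n * w ^ n) (f w))
    (z : ℂ) (hz : ‖z‖ = r) :
    (∑' k : ℕ, ‖c (m + k) * z ^ (m + k)‖ ^ q) ^ (1 / q) ≤
      2 * r ^ m / (R ^ (m - 1) * (R ^ q - r ^ q) ^ (1 / q)) *
        infDist (c 0) (frontier (convexHull ℝ G)) := by
  set d := infDist (c 0) (frontier (convexHull ℝ G))
  have hG_int : G ⊆ interior (convexHull ℝ G) := interior_maximal (subset_convexHull ℝ G) hG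
  have hc0 : c 0 = f 0 := by
    simpa using (hasSum_single 0 fun n hn => by simp [hn]).unique (hsum 0 (mem_ball_self hR))
  obtain ⟨a, p, ha, hhalf, hdist⟩ := Complex.exists_halfPlane_supporting_at_nearest_frontier
    (convex_convexHull ℝ G) hhull (hG_int (hc0 ▸ hmaps (mem_ball_self hR)))
  have hcoeff : ∀ n ≠ 0, ‖c n‖ * R ^ n ≤ 2 * d := fun n hn =>
    (norm_coeff_mul_pow_le_of_mapsTo_halfPlane hR hf.continuousOn hsum ha
      (fun w hw => hhalf _ (hG_int (hmaps hw))) hn).trans (by linarith)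
  have hterm : ∀ k, ‖c (m + k) * z ^ (m + k)‖ ≤ 2 * d * (r / R) ^ m * (r / R) ^ k := fun k => by
    have hscale : ‖c (m + k)‖ * r ^ (m + k) = ‖c (m + k)‖ * R ^ (m + k) * (r / R) ^ (m + k) := by
      rw [div_pow, mul_assoc, mul_div_cancel₀ _ (by positivity)]
    rw [norm_mul, norm_pow, hz, hscale, mul_assoc (2 * d), ← pow_add]
    exact mul_le_mul_of_nonneg_right (hcoeff _ (by omega)) (by positivity)
  calc _ ≤ 2 * d * (r / R) ^ m / (1 - (r / R) ^ q) ^ (1 / q) :=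
        rpow_tsum_rpow_le_of_le_geometric hq (by positivity) ((div_lt_one hR).2 h3)
          (fun k => norm_nonneg _) hterm
    _ = _ := by
        rw [mul_div_pow_div_one_sub_rpow_eq hR hr h3 hq hm]
        ring

theorem stmt7 (R r q : ℝ) (m : ℕ) (f : ℂ → ℂ) (c : ℕ → ℂ) (G : Set ℂ)
    (hR : 0 < R) (hq : 0 < q) (hm : 1 ≤ m) (hr : 0 ≤ r) (h3 : r < R)
    (hG : IsOpen G) (hGconn : IsConnected G)
    (hhull : convexHull ℝ G ≠ Set.univ)
    (hf : DifferentiableOn ℂ f (ball 0 R))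
    (hmaps : Set.MapsTo f (ball 0 R) G)
    (hsum : ∀ w ∈ ball (0:ℂ) R, HasSum (fun n : ℕ => c n * w ^ n) (f w))
    (z : ℂ) (hz : ‖z‖ = r) :
    (∑' k : ℕ, ‖c (m + k) * z ^ (m + k)‖ ^ q) ^ (1 / q) ≤
      2 * r ^ m / (R ^ (m - 1) * (R ^ q - r ^ q) ^ (1 / q)) *
        infDist (c 0) (frontier (convexHull ℝ G)) :=
  stmt7_general R r q m f c G hR hq hm hr h3 hG hhull hf hmaps hsum z hz
end

section
/- Let f be holomorphic on D_R with Re f > 0 on D_R. Then for every n ≥ 0 and every z with |z| = r < R, |f^{(n)}(z) - f^{(n)}(0)| ≤ (2 n! (R^{n+1} - (R - r)^{n+1})) / ((R - r)^{n+1} R^n) · Re f(0). -/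
/-!
Carathéodory's inequality `‖f⁽ᵏ⁾(c)‖ ≤ 2 k! Re f(c) / R ^ k` (`k ≥ 1`) for `Re f ≥ 0` on a disc:
on a circle of radius `s` about `c`, `f⁽ᵏ⁾(c) / k!` is the circle average of `(z - c)⁻ᵏ f`, while
the average of `(z - c)⁻ᵏ conj f` vanishes, so it is also the average of `(z - c)⁻ᵏ 2 Re f`.
Its norm is therefore at most `2 s⁻ᵏ` times the average of `Re f`, which is `Re f(c)`.
Feeding these bounds into the Taylor expansion of `f⁽ⁿ⁾` about `0` majorizes
`f⁽ⁿ⁾(z) - f⁽ⁿ⁾(0)` by `2 n! Re f(0) / Rⁿ` times `∑_{j ≥ 1} C(j + n, n) (r / R)ʲ`,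
which is `(1 - r / R)⁻⁽ⁿ⁺¹⁾ - 1`.
-/

open Complex Metric Real ComplexConjugate Topology
open scoped Nat

theorem iteratedDeriv_iteratedDeriv {𝕜 F : Type*} [NontriviallyNormedField 𝕜]
    [NormedAddCommGroup F] [NormedSpace 𝕜 F] (j n : ℕ) (f : 𝕜 → F) :
    iteratedDeriv j (iteratedDeriv n f) = iteratedDeriv (j + n) f := by
  simp only [iteratedDeriv_eq_iterate, Function.iterate_add_apply]

namespace Real

theorem norm_circleAverage_le_s14 {E : Type*} [NormedAddCommGroup E] [NormedSpace ℝ E]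
    (f : ℂ → E) (c : ℂ) (R : ℝ) :
    ‖circleAverage f c R‖ ≤ circleAverage (fun z ↦ ‖f z‖) c R := by
  rw [circleAverage, circleAverage, norm_smul, smul_eq_mul, norm_of_nonneg (by positivity)]
  gcongr
  exact intervalIntegral.norm_integral_le_integral_norm two_pi_pos.le

theorem circleAverage_conj (f : ℂ → ℂ) (c : ℂ) (R : ℝ) :
    circleAverage (fun z ↦ conj (f z)) c R = conj (circleAverage f c R) := by
  simp only [circleAverage, intervalIntegral, integral_conj, map_sub, Complex.real_smul, map_mul,
    conj_ofReal]

theorem circleAverage_re {f : ℂ → ℂ} {c : ℂ} {R : ℝ} (hf : CircleIntegrable f c R) :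
    circleAverage (fun z ↦ (f z).re) c R = (circleAverage f c R).re :=
  reCLM.circleAverage_comp_comm hf

variable {E : Type*} [NormedAddCommGroup E] [NormedSpace ℂ E] [CompleteSpace E]
  {f : ℂ → E} {c : ℂ} {s : ℝ}

theorem circleAverage_inv_pow_smul_eq_iteratedDeriv (hs : 0 < s)
    (hf : DifferentiableOn ℂ f (closedBall c s)) (k : ℕ) :
    circleAverage (fun z ↦ ((z - c) ^ k)⁻¹ • f z) c s = (k ! : ℂ)⁻¹ • iteratedDeriv k f c := by
  rw [circleAverage_eq_circleIntegral hs.ne']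
  simp_rw [smul_smul, ← mul_inv, ← pow_succ', ← one_div]
  rw [hf.circleIntegral_one_div_sub_center_pow_smul hs k, smul_smul]
  congr 1
  field_simp [two_pi_I_ne_zero]

theorem circleAverage_pow_smul_eq_zero (hs : 0 ≤ s)
    (hf : DifferentiableOn ℂ f (closedBall c s)) {k : ℕ} (hk : k ≠ 0) :
    circleAverage (fun z ↦ (z - c) ^ k • f z) c s = 0 := by
  have hg : DifferentiableOn ℂ (fun z ↦ (z - c) ^ k • f z) (closedBall c |s|) := by
    rw [abs_of_nonneg hs]
    exact ((differentiable_id.sub_const c).pow k).differentiableOn.smul hf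
  rw [(hg.mono closure_ball_subset_closedBall).diffContOnCl.circleAverage]
  simp [hk]

end Real

namespace Complex

theorem norm_iteratedDeriv_le_of_forall_mem_sphere_re_nonneg {f : ℂ → ℂ} {c : ℂ} {s : ℝ}
    (hs : 0 < s) (hf : DifferentiableOn ℂ f (closedBall c s))
    (hre : ∀ z ∈ sphere c s, 0 ≤ (f z).re)
    {k : ℕ} (hk : k ≠ 0) :
    ‖iteratedDeriv k f c‖ ≤ 2 * k ! * (f c).re / s ^ k := by
  have hsph : sphere c |s| = sphere c s := by rw [abs_of_pos hs]
  have hcont : ContinuousOn f (sphere c s) := hf.continuousOn.mono sphere_subset_closedBall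
  have hw : ContinuousOn (fun z ↦ ((z - c) ^ k)⁻¹) (sphere c s) :=
    ((continuous_sub_right c).pow k).continuousOn.inv₀ fun z hz ↦
      pow_ne_zero _ (sub_ne_zero.2 (ne_of_mem_sphere hz hs.ne'))
  -- on the circle `conj (z - c) = s ^ 2 / (z - c)`, which turns `conj f` into a holomorphic term
  have hconj : circleAverage (fun z ↦ ((z - c) ^ k)⁻¹ * conj (f z)) c s = 0 := by
    have heq : Set.EqOn (fun z ↦ ((z - c) ^ k)⁻¹ * conj (f z))
        (fun z ↦ ((s : ℂ) ^ (2 * k))⁻¹ • conj ((z - c) ^ k • f z)) (sphere c |s|) := by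
      intro z hz
      rw [hsph, mem_sphere_iff_norm] at hz
      have hz0 : z - c ≠ 0 := by rw [← norm_pos_iff, hz]; exact hs
      have hmul : conj (z - c) * (z - c) = (s : ℂ) ^ 2 := by
        rw [mul_comm, mul_conj, normSq_eq_norm_sq, hz]; push_cast; ring
      have hz0' : conj (z - c) ≠ 0 := (map_ne_zero _).2 hz0
      simp only [smul_eq_mul, map_mul, map_pow]
      rw [pow_mul, ← hmul, mul_pow]
      field_simp
    rw [circleAverage_congr_sphere heq, circleAverage_fun_smul, circleAverage_conj,
      circleAverage_pow_smul_eq_zero hs.le hf hk, map_zero, smul_zero]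
  have hcoeff : circleAverage (fun z ↦ ((z - c) ^ k)⁻¹ * ((2 * (f z).re : ℝ) : ℂ)) c s
      = (k ! : ℂ)⁻¹ * iteratedDeriv k f c := by
    simp_rw [← add_conj, mul_add]
    have h₁ : CircleIntegrable (fun z ↦ ((z - c) ^ k)⁻¹ * f z) c s :=
      (hw.mul hcont).circleIntegrable hs.le
    have h₂ : CircleIntegrable (fun z ↦ ((z - c) ^ k)⁻¹ * conj (f z)) c s :=
      (hw.mul (continuous_conj.comp_continuousOn hcont)).circleIntegrable hs.le
    rw [circleAverage_fun_add h₁ h₂, hconj, add_zero]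
    exact circleAverage_inv_pow_smul_eq_iteratedDeriv hs hf k
  have hnorm : Set.EqOn (fun z ↦ ‖((z - c) ^ k)⁻¹ * ((2 * (f z).re : ℝ) : ℂ)‖)
      (fun z ↦ (2 / s ^ k) • (f z).re) (sphere c |s|) := by
    intro z hz
    rw [hsph] at hz
    have hz' : ‖z - c‖ = s := mem_sphere_iff_norm.1 hz
    simp [hz', abs_of_nonneg (hre z hz)]
    ring
  have hmean : circleAverage (fun z ↦ (f z).re) c s = (f c).re := by
    have hdc : DiffContOnCl ℂ f (ball c |s|) :=
      (hf.mono (by rw [abs_of_pos hs]; exact closure_ball_subset_closedBall)).diffContOnCl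
    rw [circleAverage_re (hcont.circleIntegrable hs.le), hdc.circleAverage]
  have hle := norm_circleAverage_le_s14 (fun z ↦ ((z - c) ^ k)⁻¹ * ((2 * (f z).re : ℝ) : ℂ)) c s
  rw [hcoeff, circleAverage_congr_sphere hnorm, circleAverage_fun_smul, hmean, norm_mul,
    norm_inv, norm_natCast, smul_eq_mul] at hle
  exact ((inv_mul_le_iff₀ (by positivity)).1 hle).trans_eq (by ring)

theorem norm_iteratedDeriv_le_of_forall_mem_ball_re_nonneg {f : ℂ → ℂ} {c : ℂ} {R : ℝ}
    (hR : 0 < R) (hf : DifferentiableOn ℂ f (ball c R)) (hre : ∀ z ∈ ball c R, 0 ≤ (f z).re)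
    {k : ℕ} (hk : k ≠ 0) :
    ‖iteratedDeriv k f c‖ ≤ 2 * k ! * (f c).re / R ^ k := by
  have hlim : Filter.Tendsto (fun s : ℝ ↦ 2 * k ! * (f c).re / s ^ k) (𝓝[<] R)
      (𝓝 (2 * k ! * (f c).re / R ^ k)) :=
    (continuousAt_const.div (continuousAt_id.pow k) (pow_ne_zero k hR.ne')).tendsto.mono_left
      nhdsWithin_le_nhds
  refine ge_of_tendsto hlim ?_
  filter_upwards [Ioo_mem_nhdsLT hR] with s hs
  have hsub : closedBall c s ⊆ ball c R := closedBall_subset_ball hs.2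
  exact norm_iteratedDeriv_le_of_forall_mem_sphere_re_nonneg hs.1 (hf.mono hsub)
    (fun z hz ↦ hre z (hsub (sphere_subset_closedBall hz))) hk

theorem norm_iteratedDeriv_sub_le_of_forall_norm_iteratedDeriv_le {E : Type*}
    [NormedAddCommGroup E] [NormedSpace ℂ E] [CompleteSpace E] {f : ℂ → E} {c z : ℂ} {R M : ℝ}
    (hf : DifferentiableOn ℂ f (ball c R)) (hz : ‖z - c‖ < R)
    (hM : ∀ k ≠ 0, ‖iteratedDeriv k f c‖ ≤ M * k ! / R ^ k) (n : ℕ) :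
    ‖iteratedDeriv n f z - iteratedDeriv n f c‖ ≤
      M * n ! * (R ^ (n + 1) - (R - ‖z - c‖) ^ (n + 1)) / ((R - ‖z - c‖) ^ (n + 1) * R ^ n) := by
  set ρ := ‖z - c‖
  have hR : 0 < R := (norm_nonneg _).trans_lt hz
  have hx : ‖ρ / R‖ < 1 := by
    rw [norm_div, norm_of_nonneg (norm_nonneg _), norm_of_nonneg hR.le, div_lt_one hR]
    exact hz
  have hfn : DifferentiableOn ℂ (iteratedDeriv n f) (ball c R) := by
    rw [iteratedDeriv_eq_iterate]
    exact ((hf.analyticOnNhd isOpen_ball).iterated_deriv n).differentiableOn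
  have htaylor := hasSum_taylorSeries_on_ball hfn (mem_ball_iff_norm.2 hz)
  simp only [iteratedDeriv_iteratedDeriv] at htaylor
  have hmajor := (hasSum_choose_mul_geometric_of_norm_lt_one n hx).mul_left (M * n ! / R ^ n)
  have hbound : ∀ j, ‖(((j + 1) ! : ℂ)⁻¹ • (z - c) ^ (j + 1) • iteratedDeriv (j + 1 + n) f c)‖ ≤
      M * n ! / R ^ n * ((j + 1 + n).choose n * (ρ / R) ^ (j + 1)) := by
    intro j
    have hfact : ((j + 1 + n) ! : ℝ) = (j + 1 + n).choose n * (j + 1) ! * n ! := by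
      exact_mod_cast (Nat.add_choose_mul_factorial_mul_factorial (j + 1) n).symm
    rw [norm_smul, norm_smul, norm_inv, Complex.norm_natCast, norm_pow]
    calc ((j + 1) ! : ℝ)⁻¹ * (ρ ^ (j + 1) * ‖iteratedDeriv (j + 1 + n) f c‖)
        ≤ ((j + 1) ! : ℝ)⁻¹ * (ρ ^ (j + 1) * (M * (j + 1 + n) ! / R ^ (j + 1 + n))) := by
          gcongr
          exact hM _ (by omega)
      _ = _ := by
          rw [hfact, div_pow, pow_add R]
          field_simp
  have hle := ((hasSum_nat_add_iff' 1).2 htaylor).norm_le_of_bounded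
    ((hasSum_nat_add_iff' 1).2 hmajor) hbound
  convert hle using 1
  · simp
  · rw [Finset.sum_range_one, one_sub_div hR.ne']
    simp only [zero_add, Nat.choose_self, Nat.cast_one, pow_zero, mul_one, div_pow, one_div_div]
    have hRρ : R - ρ ≠ 0 := (sub_pos.2 hz).ne'
    field_simp

end Complex

theorem stmt14_general (R r : ℝ) (f : ℂ → ℂ)
    (hR : 0 < R) (h3 : r < R)
    (hf : DifferentiableOn ℂ f (ball 0 R))
    (hpos : ∀ w ∈ ball (0:ℂ) R, 0 < (f w).re)
    (z : ℂ) (hz : ‖z‖ = r) (n : ℕ) :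
    ‖iteratedDeriv n f z - iteratedDeriv n f 0‖ ≤
      2 * n.factorial * (R ^ (n + 1) - (R - r) ^ (n + 1)) / ((R - r) ^ (n + 1) * R ^ n) *
        (f 0).re := by
  have hcoeff : ∀ k ≠ 0, ‖iteratedDeriv k f 0‖ ≤ 2 * (f 0).re * k ! / R ^ k := fun k hk ↦
    (norm_iteratedDeriv_le_of_forall_mem_ball_re_nonneg hR hf (fun w hw ↦ (hpos w hw).le)
      hk).trans_eq (by ring)
  have hzR : ‖z - 0‖ < R := by rwa [sub_zero, hz]
  have key := norm_iteratedDeriv_sub_le_of_forall_norm_iteratedDeriv_le hf hzR hcoeff n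
  rw [sub_zero, hz] at key
  exact key.trans_eq (by ring)

theorem stmt14 (R r : ℝ) (f : ℂ → ℂ)
    (hR : 0 < R) (hr : 0 ≤ r) (h3 : r < R)
    (hf : DifferentiableOn ℂ f (ball 0 R))
    (hpos : ∀ w ∈ ball (0:ℂ) R, 0 < (f w).re)
    (z : ℂ) (hz : ‖z‖ = r) (n : ℕ) :
    ‖iteratedDeriv n f z - iteratedDeriv n f 0‖ ≤
      2 * n.factorial * (R ^ (n + 1) - (R - r) ^ (n + 1)) / ((R - r) ^ (n + 1) * R ^ n) *
        (f 0).re :=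
  stmt14_general R r f hR h3 hf hpos z hz n
end
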